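/- arXiv:2405.05321 — 8 statements merged into one kernel-verified Lean document; each statement's English description precedes it below -/
import Mathlib

section
/- Suppose (Ψ_p, Ψ_Q) is a static-frame perturbation satisfying the surface boundary condition Ψ_p(ℓ_B) = A₀(ℓ_B)·Ψ_Q(ℓ_B) and the non-triviality condition Ψ_p(0) ≠ 0. Then it is impossible that K(ℓ) + υ(ℓ)² < 0 for every ℓ ∈ (0, ℓ_B]; that is, there exists ℓ ∈ (0, ℓ_B] with ((μ₀+p₀)(ℓ)/φ₀(ℓ))·(φ₀(ℓ)/2 + 2·A₀(ℓ)) + A₀(ℓ)²/c(ℓ) + A₀(ℓ)·μ₀′(ℓ)/(μ₀+p₀)(ℓ) + υ(ℓ)² ≥ 0. -/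
open Set Filter MeasureTheory

theorem stmt_1
    (ℓB γ : ℝ)
    (μ0 μ0' p0 A0 φ0 c υ Ψp Ψp' Ψq Ψq' : ℝ → ℝ)
    (hℓB : 0 < ℓB) (hγ : 0 < γ)
    (hμ0deriv : ∀ ℓ ∈ Set.Icc (0:ℝ) ℓB, HasDerivWithinAt μ0 (μ0' ℓ) (Set.Icc 0 ℓB) ℓ)
    (hμ0'cont : ContinuousOn μ0' (Set.Icc 0 ℓB))
    (hp0cont : ContinuousOn p0 (Set.Icc 0 ℓB))
    (hA0cont : ContinuousOn A0 (Set.Icc 0 ℓB))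
    (hφ0cont : ContinuousOn φ0 (Set.Ioc 0 ℓB))
    (hccont : ContinuousOn c (Set.Icc 0 ℓB))
    (hυcont : ContinuousOn υ (Set.Icc 0 ℓB))
    (hμ0nonneg : ∀ ℓ ∈ Set.Icc (0:ℝ) ℓB, 0 ≤ μ0 ℓ)
    (hμppos : ∀ ℓ ∈ Set.Icc (0:ℝ) ℓB, 0 < μ0 ℓ + p0 ℓ)
    (hA0nonneg : ∀ ℓ ∈ Set.Icc (0:ℝ) ℓB, 0 ≤ A0 ℓ)
    (hφ0pos : ∀ ℓ ∈ Set.Ioc (0:ℝ) ℓB, 0 < φ0 ℓ)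
    (hpole : Filter.Tendsto (fun ℓ => ℓ * φ0 ℓ) (nhdsWithin 0 (Set.Ioi 0)) (nhds γ))
    (hcpos : ∀ ℓ ∈ Set.Icc (0:ℝ) ℓB, 0 < c ℓ)
    (hΨpderiv : ∀ ℓ ∈ Set.Icc (0:ℝ) ℓB, HasDerivWithinAt Ψp (Ψp' ℓ) (Set.Icc 0 ℓB) ℓ)
    (hΨp'cont : ContinuousOn Ψp' (Set.Icc 0 ℓB))
    (hΨqderiv : ∀ ℓ ∈ Set.Icc (0:ℝ) ℓB, HasDerivWithinAt Ψq (Ψq' ℓ) (Set.Icc 0 ℓB) ℓ)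
    (hΨq'cont : ContinuousOn Ψq' (Set.Icc 0 ℓB))
    (hS1 : ∀ ℓ ∈ Set.Ioc (0:ℝ) ℓB,
      Ψp' ℓ + ((μ0 ℓ + p0 ℓ) / φ0 ℓ + (2 + 1 / c ℓ) * A0 ℓ) * Ψp ℓ =
        ((μ0 ℓ + p0 ℓ) / φ0 ℓ * (φ0 ℓ / 2 + 2 * A0 ℓ) + (A0 ℓ) ^ 2 / c ℓ +
            A0 ℓ * μ0' ℓ / (μ0 ℓ + p0 ℓ) + (υ ℓ) ^ 2) * Ψq ℓ)
    (hS2 : ∀ ℓ ∈ Set.Ioc (0:ℝ) ℓB,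
      Ψq' ℓ + (φ0 ℓ + 2 * A0 ℓ - A0 ℓ / c ℓ - μ0' ℓ / (μ0 ℓ + p0 ℓ) -
          (μ0 ℓ + p0 ℓ) / φ0 ℓ) * Ψq ℓ = -Ψp ℓ / c ℓ)
    (hbc : Ψp ℓB = A0 ℓB * Ψq ℓB)
    (hnt : Ψp 0 ≠ 0) :
    ∃ ℓ ∈ Set.Ioc (0:ℝ) ℓB,
      0 ≤ (μ0 ℓ + p0 ℓ) / φ0 ℓ * (φ0 ℓ / 2 + 2 * A0 ℓ) + (A0 ℓ) ^ 2 / c ℓ +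
          A0 ℓ * μ0' ℓ / (μ0 ℓ + p0 ℓ) + (υ ℓ) ^ 2 := by
  by_contra hcontra
  push_neg at hcontra
  -- basic facts
  have hsub : Ioc (0:ℝ) ℓB ⊆ Icc 0 ℓB := Ioc_subset_Icc_self
  have h0Icc : (0:ℝ) ∈ Icc 0 ℓB := ⟨le_rfl, hℓB.le⟩
  have hBIcc : ℓB ∈ Icc (0:ℝ) ℓB := ⟨hℓB.le, le_rfl⟩
  have hμ0cont : ContinuousOn μ0 (Icc 0 ℓB) := fun x hx => (hμ0deriv x hx).continuousWithinAt
  have hΨpcont : ContinuousOn Ψp (Icc 0 ℓB) := fun x hx => (hΨpderiv x hx).continuousWithinAt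
  have hΨqcont : ContinuousOn Ψq (Icc 0 ℓB) := fun x hx => (hΨqderiv x hx).continuousWithinAt
  have hμpne : ∀ x ∈ Icc (0:ℝ) ℓB, μ0 x + p0 x ≠ 0 := fun x hx => (hμppos x hx).ne'
  have hcne : ∀ x ∈ Icc (0:ℝ) ℓB, c x ≠ 0 := fun x hx => (hcpos x hx).ne'
  -- bound on μ0'/(μ0+p0)
  have hqcont : ContinuousOn (fun x => μ0' x / (μ0 x + p0 x)) (Icc 0 ℓB) :=
    hμ0'cont.div (hμ0cont.add hp0cont) hμpne
  obtain ⟨C, hC⟩ := isCompact_Icc.exists_bound_of_continuousOn hqcont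
  have hC' : ∀ x ∈ Icc (0:ℝ) ℓB, |μ0' x / (μ0 x + p0 x)| ≤ C := by
    intro x hx
    have := hC x hx
    rwa [Real.norm_eq_abs] at this
  have hC0 : 0 ≤ C := le_trans (abs_nonneg _) (hC' 0 h0Icc)
  -- the function g = M + P
  set g : ℝ → ℝ := fun x => φ0 x + 4 * A0 x - μ0' x / (μ0 x + p0 x) with hgdef
  have hgcont : ContinuousOn g (Ioc 0 ℓB) :=
    (hφ0cont.add ((continuousOn_const.mul hA0cont).mono hsub)).sub (hqcont.mono hsub)
  have hglb : ∀ x ∈ Ioc (0:ℝ) ℓB, -C ≤ g x := by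
    intro x hx
    have h1 := hφ0pos x hx
    have h2 := hA0nonneg x (hsub hx)
    have h3 := abs_le.mp (hC' x (hsub hx))
    simp only [hgdef]
    linarith [h3.1, h3.2]
  have hgint : ∀ x ∈ Ioc (0:ℝ) ℓB, IntervalIntegrable g volume x ℓB := by
    intro x hx
    apply ContinuousOn.intervalIntegrable
    apply hgcont.mono
    rw [uIcc_of_le hx.2]
    exact fun y hy => ⟨lt_of_lt_of_le hx.1 hy.1, hy.2⟩
  set G : ℝ → ℝ := fun x => ∫ t in ℓB..x, g t with hGdef
  have hGderiv : ∀ x ∈ Ioo (0:ℝ) ℓB, HasDerivAt G (g x) x := by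
    intro x hx
    have hint : IntervalIntegrable g volume ℓB x := (hgint x ⟨hx.1, hx.2.le⟩).symm
    have hmeas : StronglyMeasurableAtFilter g (nhds x) volume :=
      ⟨Ioo 0 ℓB, isOpen_Ioo.mem_nhds hx,
        ((hgcont.mono Ioo_subset_Ioc_self).aestronglyMeasurable measurableSet_Ioo)⟩
    have hca : ContinuousAt g x := hgcont.continuousAt (Ioc_mem_nhds hx.1 hx.2)
    exact intervalIntegral.integral_hasDerivAt_right hint hmeas hca
  have hIocmem : Ioc (0:ℝ) ℓB ∈ nhdsWithin ℓB (Iic ℓB) := by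
    apply mem_nhdsWithin.2
    exact ⟨Ioi 0, isOpen_Ioi, hℓB, fun y hy => ⟨hy.1, hy.2⟩⟩
  have hGcontB : ContinuousWithinAt G (Iic ℓB) ℓB := by
    have hint : IntervalIntegrable g volume ℓB ℓB := (hgint ℓB ⟨hℓB, le_rfl⟩).symm
    have hmeas : StronglyMeasurableAtFilter g (nhdsWithin ℓB (Iic ℓB)) volume :=
      ⟨Ioc 0 ℓB, hIocmem, (hgcont.aestronglyMeasurable measurableSet_Ioc)⟩
    have hnB : nhdsWithin ℓB (Iic ℓB) = nhdsWithin ℓB (Ioc 0 ℓB) := by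
      rw [← Ioi_inter_Iic, nhdsWithin_inter_of_mem]
      exact mem_nhdsWithin_of_mem_nhds (Ioi_mem_nhds hℓB)
    have hcw : ContinuousWithinAt g (Iic ℓB) ℓB := by
      have h1 : ContinuousWithinAt g (Ioc 0 ℓB) ℓB := hgcont ℓB ⟨hℓB, le_rfl⟩
      unfold ContinuousWithinAt at h1 ⊢
      rw [hnB]
      exact h1
    exact (intervalIntegral.integral_hasDerivWithinAt_right hint hmeas hcw).continuousWithinAt
  -- H = exp(G) * Ψp * Ψq
  set H : ℝ → ℝ := fun x => Real.exp (G x) * (Ψp x * Ψq x) with hHdef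
  have hHderiv : ∀ x ∈ Ioo (0:ℝ) ℓB, HasDerivAt H
      (Real.exp (G x) * (((μ0 x + p0 x) / φ0 x * (φ0 x / 2 + 2 * A0 x) + (A0 x) ^ 2 / c x +
          A0 x * μ0' x / (μ0 x + p0 x) + (υ x) ^ 2) * Ψq x ^ 2 - Ψp x ^ 2 / c x)) x := by
    intro x hx
    have hxIcc : x ∈ Icc (0:ℝ) ℓB := ⟨hx.1.le, hx.2.le⟩
    have hxIoc : x ∈ Ioc (0:ℝ) ℓB := ⟨hx.1, hx.2.le⟩
    have hW : HasDerivAt (fun y => Ψp y * Ψq y) (Ψp' x * Ψq x + Ψp x * Ψq' x) x := by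
      have := ((hΨpderiv x hxIcc).mul (hΨqderiv x hxIcc)).hasDerivAt
        (Icc_mem_nhds hx.1 hx.2)
      exact this
    have hE : HasDerivAt (fun y => Real.exp (G y)) (Real.exp (G x) * g x) x :=
      (hGderiv x hx).exp
    have h := hE.mul hW
    refine h.congr_deriv ?_
    have e1 := hS1 x hxIoc
    have e2 := hS2 x hxIoc
    have key : ((μ0 x + p0 x) / φ0 x * (φ0 x / 2 + 2 * A0 x) + (A0 x) ^ 2 / c x +
          A0 x * μ0' x / (μ0 x + p0 x) + (υ x) ^ 2) * Ψq x ^ 2 - Ψp x ^ 2 / c x =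
        g x * (Ψp x * Ψq x) + (Ψp' x * Ψq x + Ψp x * Ψq' x) := by
      simp only [hgdef]
      linear_combination (-Ψq x) * e1 + (-Ψp x) * e2
    rw [key]; ring
  -- continuity of H on [ε, ℓB]
  have hnB2 : nhdsWithin ℓB (Iic ℓB) = nhdsWithin ℓB (Icc 0 ℓB) := by
    rw [← Ici_inter_Iic, nhdsWithin_inter_of_mem]
    exact mem_nhdsWithin_of_mem_nhds (Ici_mem_nhds hℓB)
  have hHcontB : ContinuousWithinAt H (Iic ℓB) ℓB := by
    have h1 : ContinuousWithinAt (fun y => Real.exp (G y)) (Iic ℓB) ℓB :=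
      Real.continuous_exp.continuousAt.comp_continuousWithinAt hGcontB
    have h2 : ContinuousWithinAt (fun y => Ψp y * Ψq y) (Iic ℓB) ℓB := by
      have h3 : ContinuousWithinAt (fun y => Ψp y * Ψq y) (Icc 0 ℓB) ℓB :=
        (hΨpcont ℓB hBIcc).mul (hΨqcont ℓB hBIcc)
      unfold ContinuousWithinAt at h3 ⊢
      rw [hnB2]
      exact h3
    exact h1.mul h2
  have hHcont : ∀ ε : ℝ, 0 < ε → ContinuousOn H (Icc ε ℓB) := by
    intro ε hε x hx
    rcases eq_or_lt_of_le hx.2 with heq | hlt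
    · rw [heq]
      exact hHcontB.mono Icc_subset_Iic_self
    · exact ((hHderiv x ⟨hε.trans_le hx.1, hlt⟩).continuousAt).continuousWithinAt
  -- antitone on [ε, ℓB]
  have hHanti : ∀ ε : ℝ, 0 < ε → AntitoneOn H (Icc ε ℓB) := by
    intro ε hε
    apply antitoneOn_of_deriv_nonpos (convex_Icc _ _) (hHcont ε hε)
    · intro x hx
      rw [interior_Icc] at hx
      exact ((hHderiv x ⟨hε.trans hx.1, hx.2⟩).differentiableAt).differentiableWithinAt
    · intro x hx
      rw [interior_Icc] at hx
      have hx' : x ∈ Ioo (0:ℝ) ℓB := ⟨hε.trans hx.1, hx.2⟩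
      rw [(hHderiv x hx').deriv]
      have hKx := hcontra x ⟨hx'.1, hx'.2.le⟩
      have hcx := hcpos x ⟨hx'.1.le, hx'.2.le⟩
      have h1 : 0 ≤ Ψp x ^ 2 / c x := div_nonneg (sq_nonneg _) hcx.le
      have h2 : ((μ0 x + p0 x) / φ0 x * (φ0 x / 2 + 2 * A0 x) + (A0 x) ^ 2 / c x +
          A0 x * μ0' x / (μ0 x + p0 x) + (υ x) ^ 2) * Ψq x ^ 2 ≤ 0 :=
        mul_nonpos_of_nonpos_of_nonneg hKx.le (sq_nonneg _)
      have := Real.exp_pos (G x)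
      nlinarith
  -- the filter at 0
  have hleq : nhdsWithin (0:ℝ) (Ioc 0 ℓB) = nhdsWithin (0:ℝ) (Ioi 0) := by
    rw [← Iic_inter_Ioi, nhdsWithin_inter_of_mem]
    exact mem_nhdsWithin_of_mem_nhds (Iic_mem_nhds hℓB)
  haveI hlne : (nhdsWithin (0:ℝ) (Ioc 0 ℓB)).NeBot := by
    rw [hleq]; infer_instance
  have hlle : nhdsWithin (0:ℝ) (Ioc 0 ℓB) ≤ nhdsWithin 0 (Icc 0 ℓB) :=
    nhdsWithin_mono 0 Ioc_subset_Icc_self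
  have tend : ∀ f : ℝ → ℝ, ContinuousOn f (Icc 0 ℓB) →
      Tendsto f (nhdsWithin (0:ℝ) (Ioc 0 ℓB)) (nhds (f 0)) :=
    fun f hf => (hf 0 h0Icc).mono_left hlle
  -- 1/φ0 → 0
  have hinvφ : Tendsto (fun x => (φ0 x)⁻¹) (nhdsWithin (0:ℝ) (Ioc 0 ℓB)) (nhds 0) := by
    have hnum : Tendsto (fun x : ℝ => x) (nhdsWithin (0:ℝ) (Ioi 0)) (nhds 0) :=
      (continuous_id.tendsto 0).mono_left nhdsWithin_le_nhds
    have h1 : Tendsto (fun x => x / (x * φ0 x)) (nhdsWithin (0:ℝ) (Ioi 0)) (nhds (0 / γ)) :=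
      hnum.div hpole hγ.ne'
    rw [zero_div] at h1
    rw [hleq]
    apply h1.congr'
    have hev : ∀ᶠ x in nhdsWithin (0:ℝ) (Ioi 0), x ∈ Ioc 0 ℓB := by
      rw [← hleq]; exact eventually_mem_nhdsWithin
    filter_upwards [hev] with x hx
    have h0 : x ≠ 0 := hx.1.ne'
    have hφ : φ0 x ≠ 0 := (hφ0pos x hx).ne'
    field_simp
  -- Ψq 0 = 0
  have hΨq0 : Ψq 0 = 0 := by
    set R : ℝ → ℝ := fun x => -Ψp x / c x - Ψq' x -
      (2 * A0 x - A0 x / c x - μ0' x / (μ0 x + p0 x)) * Ψq x with hRdef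
    have hRcont : ContinuousOn R (Icc 0 ℓB) := by
      apply ContinuousOn.sub
      apply ContinuousOn.sub
      · exact hΨpcont.neg.div hccont hcne
      · exact hΨq'cont
      · exact (((continuousOn_const.mul hA0cont).sub (hA0cont.div hccont hcne)).sub
          hqcont).mul hΨqcont
    have heq2 : ∀ x ∈ Ioc (0:ℝ) ℓB, φ0 x * Ψq x = R x + ((μ0 x + p0 x) * Ψq x) * (φ0 x)⁻¹ := by
      intro x hx
      simp only [hRdef]
      linear_combination hS2 x hx
    have htend1 : Tendsto (fun x => φ0 x * Ψq x) (nhdsWithin (0:ℝ) (Ioc 0 ℓB)) (nhds (R 0)) := by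
      have h2 : Tendsto (fun x => R x + ((μ0 x + p0 x) * Ψq x) * (φ0 x)⁻¹)
          (nhdsWithin (0:ℝ) (Ioc 0 ℓB)) (nhds (R 0 + ((μ0 0 + p0 0) * Ψq 0) * 0)) :=
        (tend R hRcont).add ((((tend μ0 hμ0cont).add (tend p0 hp0cont)).mul
          (tend Ψq hΨqcont)).mul hinvφ)
      rw [mul_zero, add_zero] at h2
      apply h2.congr'
      filter_upwards [eventually_mem_nhdsWithin] with x hx
      exact (heq2 x hx).symm
    have hT1 : Tendsto (fun x => x * (φ0 x * Ψq x)) (nhdsWithin (0:ℝ) (Ioc 0 ℓB))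
        (nhds (0 * R 0)) :=
      (((continuous_id.tendsto 0).mono_left nhdsWithin_le_nhds)).mul htend1
    have hT2 : Tendsto (fun x => x * (φ0 x * Ψq x)) (nhdsWithin (0:ℝ) (Ioc 0 ℓB))
        (nhds (γ * Ψq 0)) := by
      have hpole' : Tendsto (fun x => x * φ0 x) (nhdsWithin (0:ℝ) (Ioc 0 ℓB)) (nhds γ) := by
        rw [hleq]; exact hpole
      have := hpole'.mul (tend Ψq hΨqcont)
      apply this.congr
      intro x; ring
    have huniq : 0 * R 0 = γ * Ψq 0 := tendsto_nhds_unique hT1 hT2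
    rw [zero_mul] at huniq
    rcases mul_eq_zero.mp huniq.symm with h | h
    · exact absurd h hγ.ne'
    · exact h
  -- find δ with Ψp ≠ 0 on (0, δ]
  have hev : ∀ᶠ x in nhdsWithin (0:ℝ) (Icc 0 ℓB), Ψp x ≠ 0 :=
    (hΨpcont 0 h0Icc).eventually_ne hnt
  obtain ⟨δ', hδ'pos, hδ'⟩ := Metric.mem_nhdsWithin_iff.mp hev
  set δ : ℝ := min (δ' / 2) ℓB with hδdef
  have hδpos : 0 < δ := lt_min (by linarith) hℓB
  have hδle : δ ≤ ℓB := min_le_right _ _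
  have hΨpne : ∀ x ∈ Ioc (0:ℝ) δ, Ψp x ≠ 0 := by
    intro x hx
    apply hδ'
    constructor
    · rw [Metric.mem_ball, Real.dist_eq, sub_zero, abs_of_pos hx.1]
      have : x ≤ δ' / 2 := hx.2.trans (min_le_left _ _)
      linarith
    · exact ⟨hx.1.le, hx.2.trans hδle⟩
  have hδ2pos : 0 < δ / 2 := by linarith
  have hδ2lt : δ / 2 < δ := by linarith
  -- strict decrease on [δ/2, δ]
  have hstrict : H δ < H (δ / 2) := by
    have hsa : StrictAntiOn H (Icc (δ / 2) δ) := by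
      apply strictAntiOn_of_deriv_neg (convex_Icc _ _)
        ((hHcont (δ / 2) hδ2pos).mono (Icc_subset_Icc le_rfl hδle))
      intro x hx
      rw [interior_Icc] at hx
      have hx' : x ∈ Ioo (0:ℝ) ℓB := ⟨hδ2pos.trans hx.1, lt_of_lt_of_le hx.2 hδle⟩
      rw [(hHderiv x hx').deriv]
      have hne := hΨpne x ⟨hx'.1, hx.2.le⟩
      have hcx := hcpos x ⟨hx'.1.le, hx'.2.le⟩
      have hKx := hcontra x ⟨hx'.1, hx'.2.le⟩
      have hp2 : 0 < Ψp x ^ 2 := by positivity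
      have h1 : 0 < Ψp x ^ 2 / c x := div_pos hp2 hcx
      have h2 : ((μ0 x + p0 x) / φ0 x * (φ0 x / 2 + 2 * A0 x) + (A0 x) ^ 2 / c x +
          A0 x * μ0' x / (μ0 x + p0 x) + (υ x) ^ 2) * Ψq x ^ 2 ≤ 0 :=
        mul_nonpos_of_nonpos_of_nonneg hKx.le (sq_nonneg _)
      apply mul_neg_of_pos_of_neg (Real.exp_pos _)
      linarith
    exact hsa ⟨le_rfl, hδ2lt.le⟩ ⟨hδ2lt.le, le_rfl⟩ hδ2lt
  -- H (δ/2) ≤ 0 by taking the limit ε → 0⁺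
  have hbound : ∀ ε ∈ Ioc (0:ℝ) (δ / 2), H (δ / 2) ≤ Real.exp (C * ℓB) * |Ψp ε * Ψq ε| := by
    intro ε hε
    have hεδ2 : ε ≤ δ / 2 := hε.2
    have hεℓB : ε ≤ ℓB := hεδ2.trans (hδ2lt.le.trans hδle)
    have h1 : H (δ / 2) ≤ H ε :=
      hHanti ε hε.1 ⟨le_rfl, hεℓB⟩ ⟨hεδ2, (hδ2lt.le.trans hδle)⟩ hεδ2
    have hεIoc : ε ∈ Ioc (0:ℝ) ℓB := ⟨hε.1, hεℓB⟩
    have hGε : G ε ≤ C * ℓB := by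
      have hint := hgint ε hεIoc
      have hmono : (∫ t in ε..ℓB, (-C : ℝ)) ≤ ∫ t in ε..ℓB, g t :=
        intervalIntegral.integral_mono_on hεℓB intervalIntegrable_const hint
          (fun x hx => hglb x ⟨lt_of_lt_of_le hε.1 hx.1, hx.2⟩)
      have hconst : (∫ t in ε..ℓB, (-C : ℝ)) = (ℓB - ε) * (-C) := by
        rw [intervalIntegral.integral_const, smul_eq_mul]
      have hsymm : G ε = -∫ t in ε..ℓB, g t := intervalIntegral.integral_symm ε ℓB
      rw [hsymm]
      rw [hconst] at hmono
      nlinarith [hε.1, hεℓB, hC0]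
    calc H (δ / 2) ≤ H ε := h1
      _ = Real.exp (G ε) * (Ψp ε * Ψq ε) := rfl
      _ ≤ Real.exp (G ε) * |Ψp ε * Ψq ε| :=
          mul_le_mul_of_nonneg_left (le_abs_self _) (Real.exp_pos _).le
      _ ≤ Real.exp (C * ℓB) * |Ψp ε * Ψq ε| :=
          mul_le_mul_of_nonneg_right (Real.exp_le_exp.2 hGε) (abs_nonneg _)
  have hHδ2 : H (δ / 2) ≤ 0 := by
    have htend : Tendsto (fun ε => Real.exp (C * ℓB) * |Ψp ε * Ψq ε|)
        (nhdsWithin (0:ℝ) (Ioc 0 ℓB)) (nhds (Real.exp (C * ℓB) * |Ψp 0 * Ψq 0|)) :=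
      tendsto_const_nhds.mul (((tend Ψp hΨpcont).mul (tend Ψq hΨqcont)).abs)
    rw [hΨq0, mul_zero, abs_zero, mul_zero] at htend
    apply ge_of_tendsto htend
    filter_upwards [eventually_mem_nhdsWithin,
      (nhdsWithin_le_nhds (Iio_mem_nhds hδ2pos) : Iio (δ / 2) ∈ nhdsWithin (0:ℝ) (Ioc 0 ℓB))]
      with ε hε1 hε2
    exact hbound ε ⟨hε1.1, le_of_lt hε2⟩
  -- conclude
  have hδ2ℓB : δ / 2 ≤ ℓB := hδ2lt.le.trans hδle
  have hfinal : H ℓB ≤ H δ :=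
    hHanti (δ / 2) hδ2pos ⟨hδ2lt.le, hδle⟩ ⟨hδ2ℓB, le_rfl⟩ hδle
  have hneg : H ℓB < 0 := lt_of_le_of_lt hfinal (lt_of_lt_of_le hstrict hHδ2)
  have hGB : G ℓB = 0 := intervalIntegral.integral_same
  have hHB : H ℓB = A0 ℓB * Ψq ℓB * Ψq ℓB := by
    show Real.exp (G ℓB) * (Ψp ℓB * Ψq ℓB) = _
    rw [hGB, hbc, Real.exp_zero, one_mul]
  have hA0B := hA0nonneg ℓB hBIcc
  nlinarith [mul_self_nonneg (Ψq ℓB)]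
end

section
/- Suppose (Ψ_p, Ψ_Q) is a static-frame perturbation satisfying the surface boundary condition Ψ_p(ℓ_B) = A₀(ℓ_B)·Ψ_Q(ℓ_B) and the non-triviality condition Ψ_p(0) ≠ 0. Then Ψ_p has at least one root: there exists b ∈ (0, ℓ_B] with Ψ_p(b) = 0. -/
open Set Filter

/-- Key auxiliary lemma: with `Ψp 0 > 0` and no root of `Ψp` in `(0, ℓB]`,
we derive a contradiction. -/
lemma stmt_2_key
    (ℓB γ : ℝ)
    (μ0 μ0' p0 A0 φ0 c Ψp Ψq Ψq' : ℝ → ℝ)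
    (hℓB : 0 < ℓB) (hγ : 0 < γ)
    (hμ0cont : ContinuousOn μ0 (Set.Icc 0 ℓB))
    (hμ0'cont : ContinuousOn μ0' (Set.Icc 0 ℓB))
    (hp0cont : ContinuousOn p0 (Set.Icc 0 ℓB))
    (hA0cont : ContinuousOn A0 (Set.Icc 0 ℓB))
    (hccont : ContinuousOn c (Set.Icc 0 ℓB))
    (hμppos : ∀ ℓ ∈ Set.Icc (0:ℝ) ℓB, 0 < μ0 ℓ + p0 ℓ)
    (hA0nonneg : ∀ ℓ ∈ Set.Icc (0:ℝ) ℓB, 0 ≤ A0 ℓ)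
    (hφ0pos : ∀ ℓ ∈ Set.Ioc (0:ℝ) ℓB, 0 < φ0 ℓ)
    (hpole : Filter.Tendsto (fun ℓ => ℓ * φ0 ℓ) (nhdsWithin 0 (Set.Ioi 0)) (nhds γ))
    (hcpos : ∀ ℓ ∈ Set.Icc (0:ℝ) ℓB, 0 < c ℓ)
    (hΨpcont : ContinuousOn Ψp (Set.Icc 0 ℓB))
    (hΨqderiv : ∀ ℓ ∈ Set.Icc (0:ℝ) ℓB, HasDerivWithinAt Ψq (Ψq' ℓ) (Set.Icc 0 ℓB) ℓ)
    (hΨq'cont : ContinuousOn Ψq' (Set.Icc 0 ℓB))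
    (hS2 : ∀ ℓ ∈ Set.Ioc (0:ℝ) ℓB,
      Ψq' ℓ + (φ0 ℓ + 2 * A0 ℓ - A0 ℓ / c ℓ - μ0' ℓ / (μ0 ℓ + p0 ℓ) -
          (μ0 ℓ + p0 ℓ) / φ0 ℓ) * Ψq ℓ = -Ψp ℓ / c ℓ)
    (hbc : Ψp ℓB = A0 ℓB * Ψq ℓB)
    (hpos : 0 < Ψp 0)
    (hnoroot : ∀ b ∈ Set.Ioc (0:ℝ) ℓB, Ψp b ≠ 0) : False := by
  have h0mem : (0:ℝ) ∈ Set.Icc (0:ℝ) ℓB := ⟨le_rfl, hℓB.le⟩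
  have hBmem : ℓB ∈ Set.Icc (0:ℝ) ℓB := ⟨hℓB.le, le_rfl⟩
  have hΨqcont : ContinuousOn Ψq (Set.Icc 0 ℓB) :=
    fun x hx => (hΨqderiv x hx).continuousWithinAt
  -- the filter `l`
  set l : Filter ℝ := nhdsWithin 0 (Set.Ioc 0 ℓB) with hldef
  have hl : l = nhdsWithin 0 (Set.Ioi 0) := nhdsWithin_Ioc_eq_nhdsGT hℓB
  haveI hlne : l.NeBot := by rw [hl]; infer_instance
  -- tendsto within `l` from ContinuousOn on the closed interval
  have tendL : ∀ f : ℝ → ℝ, ContinuousOn f (Set.Icc 0 ℓB) → Tendsto f l (nhds (f 0)) := by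
    intro f hf
    exact ((hf 0 h0mem).tendsto).mono_left (nhdsWithin_mono 0 Set.Ioc_subset_Icc_self)
  have hmemIoc : ∀ᶠ ℓ in l, ℓ ∈ Set.Ioc (0:ℝ) ℓB := self_mem_nhdsWithin
  -- `1/φ0 → 0`
  have hinv : Tendsto (fun ℓ => (φ0 ℓ)⁻¹) l (nhds 0) := by
    have h1 : Tendsto (fun ℓ : ℝ => ℓ / (ℓ * φ0 ℓ)) (nhdsWithin 0 (Set.Ioi 0))
        (nhds (0 / γ)) :=
      Tendsto.div (tendsto_id.mono_left nhdsWithin_le_nhds) hpole hγ.ne'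
    rw [zero_div] at h1
    rw [hl]
    refine h1.congr' ?_
    filter_upwards [self_mem_nhdsWithin] with x hx
    rw [← div_div, div_self (ne_of_gt hx), one_div]
  -- `(μ0 + p0)/φ0 → 0`
  have hmod : Tendsto (fun ℓ => (μ0 ℓ + p0 ℓ) / φ0 ℓ) l (nhds 0) := by
    have := ((tendL μ0 hμ0cont).add (tendL p0 hp0cont)).mul hinv
    rw [mul_zero] at this
    exact this.congr (fun x => (div_eq_mul_inv _ _).symm)
  -- limit of the bounded part `B`
  have hc0 : (0:ℝ) < c 0 := hcpos 0 h0mem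
  have hμp0 : (0:ℝ) < μ0 0 + p0 0 := hμppos 0 h0mem
  have hBtend : Tendsto (fun ℓ => 2 * A0 ℓ - A0 ℓ / c ℓ - μ0' ℓ / (μ0 ℓ + p0 ℓ) -
      (μ0 ℓ + p0 ℓ) / φ0 ℓ) l
      (nhds (2 * A0 0 - A0 0 / c 0 - μ0' 0 / (μ0 0 + p0 0) - 0)) := by
    refine Tendsto.sub (Tendsto.sub (Tendsto.sub ?_ ?_) ?_) hmod
    · exact (tendL A0 hA0cont).const_mul 2
    · exact (tendL A0 hA0cont).div (tendL c hccont) hc0.ne'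
    · exact (tendL μ0' hμ0'cont).div ((tendL μ0 hμ0cont).add (tendL p0 hp0cont)) hμp0.ne'
  -- rewritten form of S2
  have hS2' : ∀ ℓ ∈ Set.Ioc (0:ℝ) ℓB,
      Ψq' ℓ = -Ψp ℓ / c ℓ -
        (2 * A0 ℓ - A0 ℓ / c ℓ - μ0' ℓ / (μ0 ℓ + p0 ℓ) - (μ0 ℓ + p0 ℓ) / φ0 ℓ) * Ψq ℓ -
        φ0 ℓ * Ψq ℓ := by
    intro ℓ hℓ
    linear_combination hS2 ℓ hℓ
  -- Ψq 0 = 0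
  have hQ0 : Ψq 0 = 0 := by
    have hF : Tendsto (fun ℓ => (-Ψq' ℓ -
        (2 * A0 ℓ - A0 ℓ / c ℓ - μ0' ℓ / (μ0 ℓ + p0 ℓ) - (μ0 ℓ + p0 ℓ) / φ0 ℓ) * Ψq ℓ -
        Ψp ℓ / c ℓ) * (φ0 ℓ)⁻¹) l (nhds ((-Ψq' 0 -
        (2 * A0 0 - A0 0 / c 0 - μ0' 0 / (μ0 0 + p0 0) - 0) * Ψq 0 -
        Ψp 0 / c 0) * 0)) := by
      refine Tendsto.mul ?_ hinv
      exact ((tendL Ψq' hΨq'cont).neg.sub (hBtend.mul (tendL Ψq hΨqcont))).sub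
        ((tendL Ψp hΨpcont).div (tendL c hccont) hc0.ne')
    rw [mul_zero] at hF
    have hQrepr : Tendsto Ψq l (nhds 0) := by
      refine hF.congr' ?_
      filter_upwards [hmemIoc] with ℓ hℓ
      have hφ := hφ0pos ℓ hℓ
      have h2 := hS2' ℓ hℓ
      have hX : -Ψq' ℓ -
          (2 * A0 ℓ - A0 ℓ / c ℓ - μ0' ℓ / (μ0 ℓ + p0 ℓ) - (μ0 ℓ + p0 ℓ) / φ0 ℓ) * Ψq ℓ -
          Ψp ℓ / c ℓ = φ0 ℓ * Ψq ℓ := by linear_combination -h2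
      rw [hX, mul_comm (φ0 ℓ), mul_inv_cancel_right₀ hφ.ne']
    exact tendsto_nhds_unique (tendL Ψq hΨqcont) hQrepr
  -- Ψp > 0 on [0, ℓB]
  have hΨppos : ∀ x ∈ Set.Icc (0:ℝ) ℓB, 0 < Ψp x := by
    intro x hx
    by_contra hle
    push_neg at hle
    rcases hle.lt_or_eq with hlt | heq
    · have hx0 : 0 < x := by
        rcases hx.1.eq_or_lt with h | h
        · rw [← h] at hlt; linarith
        · exact h
      have hsub : Set.Icc (0:ℝ) x ⊆ Set.Icc 0 ℓB := Set.Icc_subset_Icc le_rfl hx.2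
      have := intermediate_value_Ioo' (le_of_lt hx0) (hΨpcont.mono hsub)
        (show (0:ℝ) ∈ Set.Ioo (Ψp x) (Ψp 0) from ⟨hlt, hpos⟩)
      obtain ⟨y, hy, hy0⟩ := this
      exact hnoroot y ⟨hy.1, hy.2.le.trans hx.2⟩ hy0
    · rcases hx.1.eq_or_lt with h | h
      · rw [← h] at heq; exact (ne_of_gt hpos) heq
      · exact hnoroot x ⟨h, hx.2⟩ heq
  have hΨpB : 0 < Ψp ℓB := hΨppos ℓB hBmem
  -- A0 ℓB > 0 and Ψq ℓB > 0
  have hA0B : 0 < A0 ℓB := by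
    rcases (hA0nonneg ℓB hBmem).eq_or_lt with h | h
    · rw [← h, zero_mul] at hbc; exact absurd hbc (ne_of_gt hΨpB)
    · exact h
  have hQB : 0 < Ψq ℓB := by
    have : Ψq ℓB = Ψp ℓB / A0 ℓB := by rw [hbc]; field_simp
    rw [this]; exact div_pos hΨpB hA0B
  -- the last zero of Ψq
  set S : Set ℝ := Set.Icc 0 ℓB ∩ Ψq ⁻¹' {0} with hSdef
  have hSclosed : IsClosed S := hΨqcont.preimage_isClosed_of_isClosed isClosed_Icc
    isClosed_singleton
  have h0S : (0:ℝ) ∈ S := ⟨h0mem, by simpa using hQ0⟩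
  have hSbdd : BddAbove S := BddAbove.mono (Set.inter_subset_left) (bddAbove_Icc)
  set a : ℝ := sSup S with hadef
  have haS : a ∈ S := hSclosed.csSup_mem ⟨0, h0S⟩ hSbdd
  have haIcc : a ∈ Set.Icc (0:ℝ) ℓB := haS.1
  have haq : Ψq a = 0 := haS.2
  have haB : a < ℓB := by
    rcases haIcc.2.eq_or_lt with h | h
    · rw [h] at haq; exact absurd haq (ne_of_gt hQB)
    · exact h
  -- Ψq > 0 on (a, ℓB]
  have hQpos : ∀ x ∈ Set.Ioc a ℓB, 0 < Ψq x := by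
    have hnz : ∀ x ∈ Set.Ioc a ℓB, Ψq x ≠ 0 := by
      intro x hx h0
      have : x ∈ S := ⟨⟨haIcc.1.trans hx.1.le, hx.2⟩, by simpa using h0⟩
      exact absurd (le_csSup hSbdd this) (not_le.mpr hx.1)
    intro x hx
    rcases lt_trichotomy (Ψq x) 0 with h | h | h
    · exfalso
      have hsub : Set.Icc x ℓB ⊆ Set.Icc 0 ℓB :=
        Set.Icc_subset_Icc (haIcc.1.trans hx.1.le) le_rfl
      obtain ⟨y, hy, hy0⟩ := intermediate_value_Ioo hx.2 (hΨqcont.mono hsub)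
        (show (0:ℝ) ∈ Set.Ioo (Ψq x) (Ψq ℓB) from ⟨h, hQB⟩)
      exact hnz y ⟨hx.1.trans hy.1, hy.2.le⟩ hy0
    · exact absurd h (hnz x hx)
    · exact h
  -- case split on a
  rcases haIcc.1.eq_or_lt with ha0 | ha0
  · -- a = 0 : Ψq > 0 on (0, ℓB], but Ψq' < 0 near 0
    have hQpos' : ∀ x ∈ Set.Ioc (0:ℝ) ℓB, 0 < Ψq x := by
      intro x hx
      exact hQpos x ⟨by rw [← ha0]; exact hx.1, hx.2⟩
    have hgt : Tendsto (fun ℓ => -Ψp ℓ / c ℓ -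
        (2 * A0 ℓ - A0 ℓ / c ℓ - μ0' ℓ / (μ0 ℓ + p0 ℓ) - (μ0 ℓ + p0 ℓ) / φ0 ℓ) * Ψq ℓ) l
        (nhds (-Ψp 0 / c 0 -
          (2 * A0 0 - A0 0 / c 0 - μ0' 0 / (μ0 0 + p0 0) - 0) * Ψq 0)) :=
      Tendsto.sub ((tendL Ψp hΨpcont).neg.div (tendL c hccont) hc0.ne')
        (hBtend.mul (tendL Ψq hΨqcont))
    have hlim_neg : -Ψp 0 / c 0 -
        (2 * A0 0 - A0 0 / c 0 - μ0' 0 / (μ0 0 + p0 0) - 0) * Ψq 0 < 0 := by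
      rw [hQ0, mul_zero, sub_zero]
      exact div_neg_of_neg_of_pos (by linarith) hc0
    have hev : ∀ᶠ ℓ in l, Ψq' ℓ < 0 := by
      filter_upwards [hmemIoc, hgt.eventually (eventually_lt_nhds hlim_neg)] with ℓ hℓ hg
      have h2 := hS2' ℓ hℓ
      have hφq : 0 ≤ φ0 ℓ * Ψq ℓ :=
        mul_nonneg (hφ0pos ℓ hℓ).le (hQpos' ℓ hℓ).le
      linarith
    -- extract an interval
    rw [hldef, eventually_nhdsWithin_iff, Metric.eventually_nhds_iff] at hev
    obtain ⟨ε, hε, hev⟩ := hev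
    set ε' : ℝ := min (ε / 2) ℓB with hε'def
    have hε'pos : 0 < ε' := lt_min (by linarith) hℓB
    have hε'B : ε' ≤ ℓB := min_le_right _ _
    have hderiv_neg : ∀ x ∈ interior (Set.Icc (0:ℝ) ε'), deriv Ψq x < 0 := by
      intro x hx
      rw [interior_Icc] at hx
      have hxIoc : x ∈ Set.Ioc (0:ℝ) ℓB := ⟨hx.1, hx.2.le.trans hε'B⟩
      have hxd : |x - 0| < ε := by
        rw [sub_zero, abs_of_pos hx.1]
        calc x < ε' := hx.2
          _ ≤ ε / 2 := min_le_left _ _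
          _ < ε := by linarith
      have hq' : Ψq' x < 0 := by
        have := hev (show dist x 0 < ε by rwa [Real.dist_eq]) hxIoc
        exact this
      have hd : HasDerivAt Ψq (Ψq' x) x :=
        (hΨqderiv x ⟨hx.1.le, hx.2.le.trans hε'B⟩).hasDerivAt
          (Icc_mem_nhds hx.1 (lt_of_lt_of_le hx.2 hε'B))
      rw [hd.deriv]; exact hq'
    have hanti : StrictAntiOn Ψq (Set.Icc 0 ε') :=
      strictAntiOn_of_deriv_neg (convex_Icc _ _)
        (hΨqcont.mono (Set.Icc_subset_Icc le_rfl hε'B)) hderiv_neg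
    have := hanti (Set.left_mem_Icc.mpr hε'pos.le)
      (Set.right_mem_Icc.mpr hε'pos.le) hε'pos
    rw [hQ0] at this
    exact absurd this (not_lt.mpr (hQpos' ε' ⟨hε'pos, hε'B⟩).le)
  · -- 0 < a : a is a zero with Ψq > 0 just to the right, but Ψq' a < 0
    have haIoc : a ∈ Set.Ioc (0:ℝ) ℓB := ⟨ha0, haIcc.2⟩
    have hq'a : Ψq' a < 0 := by
      have h2 := hS2' a haIoc
      rw [haq, mul_zero, mul_zero, sub_zero, sub_zero] at h2
      rw [h2]
      exact div_neg_of_neg_of_pos (by linarith [hΨppos a haIcc]) (hcpos a haIcc)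
    -- but the right derivative at a is nonneg
    have hsub : Set.Ioc a ℓB ⊆ Set.Icc 0 ℓB :=
      fun x hx => ⟨haIcc.1.trans hx.1.le, hx.2⟩
    have hd : HasDerivWithinAt Ψq (Ψq' a) (Set.Ioc a ℓB) a :=
      (hΨqderiv a haIcc).mono hsub
    rw [hasDerivWithinAt_iff_tendsto_slope] at hd
    haveI : (nhdsWithin a (Set.Ioc a ℓB \ {a})).NeBot := by
      rw [show Set.Ioc a ℓB \ {a} = Set.Ioc a ℓB from
        Set.diff_singleton_eq_self (fun h => (lt_irrefl a h.1))]
      rw [nhdsWithin_Ioc_eq_nhdsGT haB]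
      infer_instance
    have hslope : ∀ᶠ x in nhdsWithin a (Set.Ioc a ℓB \ {a}), 0 ≤ slope Ψq a x := by
      filter_upwards [self_mem_nhdsWithin] with x hx
      have hx' : x ∈ Set.Ioc a ℓB := hx.1
      rw [slope_def_field, haq]
      have : (0:ℝ) ≤ (Ψq x - 0) / (x - a) :=
        div_nonneg (by linarith [hQpos x hx']) (by linarith [hx'.1])
      simpa [div_eq_mul_inv] using this
    have := ge_of_tendsto hd hslope
    linarith

theorem stmt_2
    (ℓB γ : ℝ)
    (μ0 μ0' p0 A0 φ0 c υ Ψp Ψp' Ψq Ψq' : ℝ → ℝ)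
    (hℓB : 0 < ℓB) (hγ : 0 < γ)
    (hμ0deriv : ∀ ℓ ∈ Set.Icc (0:ℝ) ℓB, HasDerivWithinAt μ0 (μ0' ℓ) (Set.Icc 0 ℓB) ℓ)
    (hμ0'cont : ContinuousOn μ0' (Set.Icc 0 ℓB))
    (hp0cont : ContinuousOn p0 (Set.Icc 0 ℓB))
    (hA0cont : ContinuousOn A0 (Set.Icc 0 ℓB))
    (hφ0cont : ContinuousOn φ0 (Set.Ioc 0 ℓB))
    (hccont : ContinuousOn c (Set.Icc 0 ℓB))
    (hυcont : ContinuousOn υ (Set.Icc 0 ℓB))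
    (hμ0nonneg : ∀ ℓ ∈ Set.Icc (0:ℝ) ℓB, 0 ≤ μ0 ℓ)
    (hμppos : ∀ ℓ ∈ Set.Icc (0:ℝ) ℓB, 0 < μ0 ℓ + p0 ℓ)
    (hA0nonneg : ∀ ℓ ∈ Set.Icc (0:ℝ) ℓB, 0 ≤ A0 ℓ)
    (hφ0pos : ∀ ℓ ∈ Set.Ioc (0:ℝ) ℓB, 0 < φ0 ℓ)
    (hpole : Filter.Tendsto (fun ℓ => ℓ * φ0 ℓ) (nhdsWithin 0 (Set.Ioi 0)) (nhds γ))
    (hcpos : ∀ ℓ ∈ Set.Icc (0:ℝ) ℓB, 0 < c ℓ)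
    (hΨpderiv : ∀ ℓ ∈ Set.Icc (0:ℝ) ℓB, HasDerivWithinAt Ψp (Ψp' ℓ) (Set.Icc 0 ℓB) ℓ)
    (hΨp'cont : ContinuousOn Ψp' (Set.Icc 0 ℓB))
    (hΨqderiv : ∀ ℓ ∈ Set.Icc (0:ℝ) ℓB, HasDerivWithinAt Ψq (Ψq' ℓ) (Set.Icc 0 ℓB) ℓ)
    (hΨq'cont : ContinuousOn Ψq' (Set.Icc 0 ℓB))
    (hS1 : ∀ ℓ ∈ Set.Ioc (0:ℝ) ℓB,
      Ψp' ℓ + ((μ0 ℓ + p0 ℓ) / φ0 ℓ + (2 + 1 / c ℓ) * A0 ℓ) * Ψp ℓ =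
        ((μ0 ℓ + p0 ℓ) / φ0 ℓ * (φ0 ℓ / 2 + 2 * A0 ℓ) + (A0 ℓ) ^ 2 / c ℓ +
            A0 ℓ * μ0' ℓ / (μ0 ℓ + p0 ℓ) + (υ ℓ) ^ 2) * Ψq ℓ)
    (hS2 : ∀ ℓ ∈ Set.Ioc (0:ℝ) ℓB,
      Ψq' ℓ + (φ0 ℓ + 2 * A0 ℓ - A0 ℓ / c ℓ - μ0' ℓ / (μ0 ℓ + p0 ℓ) -
          (μ0 ℓ + p0 ℓ) / φ0 ℓ) * Ψq ℓ = -Ψp ℓ / c ℓ)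
    (hbc : Ψp ℓB = A0 ℓB * Ψq ℓB)
    (hnt : Ψp 0 ≠ 0) :
    ∃ b ∈ Set.Ioc (0:ℝ) ℓB, Ψp b = 0 := by
  by_contra hcon
  push_neg at hcon
  have hμ0cont : ContinuousOn μ0 (Set.Icc 0 ℓB) :=
    fun x hx => (hμ0deriv x hx).continuousWithinAt
  have hΨpcont : ContinuousOn Ψp (Set.Icc 0 ℓB) :=
    fun x hx => (hΨpderiv x hx).continuousWithinAt
  rcases hnt.lt_or_gt with hneg | hpos
  · -- Ψp 0 < 0 : apply the key lemma to the negated solution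
    refine stmt_2_key ℓB γ μ0 μ0' p0 A0 φ0 c (fun x => -Ψp x) (fun x => -Ψq x)
      (fun x => -Ψq' x) hℓB hγ hμ0cont hμ0'cont hp0cont hA0cont hccont hμppos
      hA0nonneg hφ0pos hpole hcpos hΨpcont.neg
      (fun x hx => (hΨqderiv x hx).neg) hΨq'cont.neg ?_ ?_ (by simpa using hneg) ?_
    · intro ℓ hℓ
      linear_combination -(hS2 ℓ hℓ)
    · simp only [hbc]; ring
    · intro b hb h0
      exact hcon b hb (neg_eq_zero.mp h0)
  · exact stmt_2_key ℓB γ μ0 μ0' p0 A0 φ0 c Ψp Ψq Ψq' hℓB hγ hμ0cont hμ0'cont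
      hp0cont hA0cont hccont hμppos hA0nonneg hφ0pos hpole hcpos hΨpcont
      hΨqderiv hΨq'cont hS2 hbc hpos hcon
end

section
/- Suppose (Ψ_p, Ψ_Q) is a static-frame perturbation (in particular Ψ_Q is continuously differentiable on [0, ℓ_B] and equation (S2) holds on (0, ℓ_B]). Then, because φ₀ has a simple pole at the centre (φ₀(ℓ) → +∞ as ℓ → 0⁺) while all the other coefficients of (S2) remain bounded near ℓ = 0, the heat-flux coefficient must vanish at the centre: Ψ_Q(0) = 0. -/
open Set Filter

theorem stmt_3
    (ℓB γ : ℝ)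
    (μ0 μ0' p0 A0 φ0 c υ Ψp Ψp' Ψq Ψq' : ℝ → ℝ)
    (hℓB : 0 < ℓB) (hγ : 0 < γ)
    (hμ0deriv : ∀ ℓ ∈ Set.Icc (0:ℝ) ℓB, HasDerivWithinAt μ0 (μ0' ℓ) (Set.Icc 0 ℓB) ℓ)
    (hμ0'cont : ContinuousOn μ0' (Set.Icc 0 ℓB))
    (hp0cont : ContinuousOn p0 (Set.Icc 0 ℓB))
    (hA0cont : ContinuousOn A0 (Set.Icc 0 ℓB))
    (hφ0cont : ContinuousOn φ0 (Set.Ioc 0 ℓB))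
    (hccont : ContinuousOn c (Set.Icc 0 ℓB))
    (hυcont : ContinuousOn υ (Set.Icc 0 ℓB))
    (hμ0nonneg : ∀ ℓ ∈ Set.Icc (0:ℝ) ℓB, 0 ≤ μ0 ℓ)
    (hμppos : ∀ ℓ ∈ Set.Icc (0:ℝ) ℓB, 0 < μ0 ℓ + p0 ℓ)
    (hA0nonneg : ∀ ℓ ∈ Set.Icc (0:ℝ) ℓB, 0 ≤ A0 ℓ)
    (hφ0pos : ∀ ℓ ∈ Set.Ioc (0:ℝ) ℓB, 0 < φ0 ℓ)
    (hpole : Filter.Tendsto (fun ℓ => ℓ * φ0 ℓ) (nhdsWithin 0 (Set.Ioi 0)) (nhds γ))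
    (hcpos : ∀ ℓ ∈ Set.Icc (0:ℝ) ℓB, 0 < c ℓ)
    (hΨpderiv : ∀ ℓ ∈ Set.Icc (0:ℝ) ℓB, HasDerivWithinAt Ψp (Ψp' ℓ) (Set.Icc 0 ℓB) ℓ)
    (hΨp'cont : ContinuousOn Ψp' (Set.Icc 0 ℓB))
    (hΨqderiv : ∀ ℓ ∈ Set.Icc (0:ℝ) ℓB, HasDerivWithinAt Ψq (Ψq' ℓ) (Set.Icc 0 ℓB) ℓ)
    (hΨq'cont : ContinuousOn Ψq' (Set.Icc 0 ℓB))
    (hS1 : ∀ ℓ ∈ Set.Ioc (0:ℝ) ℓB,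
      Ψp' ℓ + ((μ0 ℓ + p0 ℓ) / φ0 ℓ + (2 + 1 / c ℓ) * A0 ℓ) * Ψp ℓ =
        ((μ0 ℓ + p0 ℓ) / φ0 ℓ * (φ0 ℓ / 2 + 2 * A0 ℓ) + (A0 ℓ) ^ 2 / c ℓ +
            A0 ℓ * μ0' ℓ / (μ0 ℓ + p0 ℓ) + (υ ℓ) ^ 2) * Ψq ℓ)
    (hS2 : ∀ ℓ ∈ Set.Ioc (0:ℝ) ℓB,
      Ψq' ℓ + (φ0 ℓ + 2 * A0 ℓ - A0 ℓ / c ℓ - μ0' ℓ / (μ0 ℓ + p0 ℓ) -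
          (μ0 ℓ + p0 ℓ) / φ0 ℓ) * Ψq ℓ = -Ψp ℓ / c ℓ)
    : Ψq 0 = 0 := by
  have h0mem : (0:ℝ) ∈ Set.Icc (0:ℝ) ℓB := ⟨le_refl _, hℓB.le⟩
  set l := nhdsWithin (0:ℝ) (Set.Ioc 0 ℓB) with hl
  haveI hne : l.NeBot := by
    rw [hl]
    refine mem_closure_iff_nhdsWithin_neBot.mp ?_
    rw [closure_Ioc hℓB.ne]
    exact h0mem
  have hle_icc : l ≤ nhdsWithin (0:ℝ) (Set.Icc 0 ℓB) :=
    nhdsWithin_mono _ Set.Ioc_subset_Icc_self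
  have hle_ioi : l ≤ nhdsWithin (0:ℝ) (Set.Ioi 0) :=
    nhdsWithin_mono _ Set.Ioc_subset_Ioi_self
  have hid : Filter.Tendsto (fun ℓ : ℝ => ℓ) l (nhds 0) := by
    have : Filter.Tendsto (fun ℓ : ℝ => ℓ) (nhds (0:ℝ)) (nhds 0) := tendsto_id
    exact this.mono_left (nhdsWithin_le_nhds.trans le_rfl)
  have h1 : Filter.Tendsto (fun ℓ => ℓ * φ0 ℓ) l (nhds γ) := hpole.mono_left hle_ioi
  -- limits of the various functions at 0 along l
  have mk : ∀ (f : ℝ → ℝ), ContinuousOn f (Set.Icc 0 ℓB) →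
      Filter.Tendsto f l (nhds (f 0)) := fun f hf =>
    (hf.continuousWithinAt h0mem).mono_left hle_icc
  have hq : Filter.Tendsto Ψq l (nhds (Ψq 0)) :=
    mk Ψq (fun x hx => (hΨqderiv x hx).continuousWithinAt)
  have hq' : Filter.Tendsto Ψq' l (nhds (Ψq' 0)) := mk Ψq' hΨq'cont
  have hp : Filter.Tendsto Ψp l (nhds (Ψp 0)) :=
    mk Ψp (fun x hx => (hΨpderiv x hx).continuousWithinAt)
  have hA : Filter.Tendsto A0 l (nhds (A0 0)) := mk A0 hA0cont
  have hc : Filter.Tendsto c l (nhds (c 0)) := mk c hccont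
  have hm' : Filter.Tendsto μ0' l (nhds (μ0' 0)) := mk μ0' hμ0'cont
  have hμcont : ContinuousOn μ0 (Set.Icc 0 ℓB) :=
    fun x hx => (hμ0deriv x hx).continuousWithinAt
  have hm : Filter.Tendsto (fun ℓ => μ0 ℓ + p0 ℓ) l (nhds (μ0 0 + p0 0)) :=
    mk _ (hμcont.add hp0cont)
  have hcne : c 0 ≠ 0 := (hcpos 0 h0mem).ne'
  have hmne : μ0 0 + p0 0 ≠ 0 := (hμppos 0 h0mem).ne'
  -- F is the bounded part of (S2)
  set F : ℝ → ℝ := fun ℓ => -Ψp ℓ / c ℓ - Ψq' ℓ -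
    (2 * A0 ℓ - A0 ℓ / c ℓ - μ0' ℓ / (μ0 ℓ + p0 ℓ)) * Ψq ℓ with hF
  have hFt : Filter.Tendsto F l (nhds (F 0)) := by
    apply Filter.Tendsto.sub
    apply Filter.Tendsto.sub
    · exact (hp.neg.div hc hcne)
    · exact hq'
    · exact (((hA.const_mul 2).sub (hA.div hc hcne)).sub (hm'.div hm hmne)).mul hq
  have hlF : Filter.Tendsto (fun ℓ => ℓ * F ℓ) l (nhds 0) := by
    have := hid.mul hFt
    simpa using this
  -- correction term
  have hcorr : Filter.Tendsto (fun ℓ => ℓ * ((μ0 ℓ + p0 ℓ) / φ0 ℓ * Ψq ℓ)) l (nhds 0) := by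
    have h2 : Filter.Tendsto (fun ℓ => ℓ * ℓ * (μ0 ℓ + p0 ℓ) * Ψq ℓ / (ℓ * φ0 ℓ)) l
        (nhds (0 * 0 * (μ0 0 + p0 0) * Ψq 0 / γ)) :=
      (((hid.mul hid).mul hm).mul hq).div h1 hγ.ne'
    have h2' : Filter.Tendsto (fun ℓ => ℓ * ℓ * (μ0 ℓ + p0 ℓ) * Ψq ℓ / (ℓ * φ0 ℓ)) l (nhds 0) := by
      simpa using h2
    refine h2'.congr' ?_
    filter_upwards [eventually_mem_nhdsWithin] with ℓ hℓ
    have hℓ0 : ℓ ≠ 0 := (hℓ.1).ne'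
    have hφ : φ0 ℓ ≠ 0 := (hφ0pos ℓ hℓ).ne'
    field_simp
  have hEq : ∀ᶠ ℓ in l, ℓ * F ℓ + ℓ * ((μ0 ℓ + p0 ℓ) / φ0 ℓ * Ψq ℓ) = ℓ * φ0 ℓ * Ψq ℓ := by
    filter_upwards [eventually_mem_nhdsWithin] with ℓ hℓ
    have h := hS2 ℓ hℓ
    simp only [hF]
    linear_combination (-ℓ) * h
  have ht0 : Filter.Tendsto (fun ℓ => ℓ * φ0 ℓ * Ψq ℓ) l (nhds 0) := by
    have := hlF.add hcorr
    simp only [add_zero] at this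
    exact this.congr' hEq
  have ht1 : Filter.Tendsto (fun ℓ => ℓ * φ0 ℓ * Ψq ℓ) l (nhds (γ * Ψq 0)) := h1.mul hq
  have : γ * Ψq 0 = 0 := tendsto_nhds_unique ht1 ht0
  rcases mul_eq_zero.mp this with h | h
  · exact absurd h hγ.ne'
  · exact h
end

section
/- Suppose (Ψ_p, Ψ_Q) is a static-frame perturbation with Ψ_p(0) ≠ 0. Then the one-sided derivative of Ψ_Q at the centre satisfies (1 + γ)·c(0)·Ψ_Q′(0) = −Ψ_p(0); in particular Ψ_Q′(0)·Ψ_p(0) < 0, and consequently there exists ε ∈ (0, ℓ_B) such that Ψ_p(ℓ)·Ψ_Q(ℓ) < 0 for every ℓ ∈ (0, ε). -/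
open Set Filter

theorem stmt_4
    (ℓB γ : ℝ)
    (μ0 μ0' p0 A0 φ0 c υ Ψp Ψp' Ψq Ψq' : ℝ → ℝ)
    (hℓB : 0 < ℓB) (hγ : 0 < γ)
    (hμ0deriv : ∀ ℓ ∈ Set.Icc (0:ℝ) ℓB, HasDerivWithinAt μ0 (μ0' ℓ) (Set.Icc 0 ℓB) ℓ)
    (hμ0'cont : ContinuousOn μ0' (Set.Icc 0 ℓB))
    (hp0cont : ContinuousOn p0 (Set.Icc 0 ℓB))
    (hA0cont : ContinuousOn A0 (Set.Icc 0 ℓB))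
    (hφ0cont : ContinuousOn φ0 (Set.Ioc 0 ℓB))
    (hccont : ContinuousOn c (Set.Icc 0 ℓB))
    (hυcont : ContinuousOn υ (Set.Icc 0 ℓB))
    (hμ0nonneg : ∀ ℓ ∈ Set.Icc (0:ℝ) ℓB, 0 ≤ μ0 ℓ)
    (hμppos : ∀ ℓ ∈ Set.Icc (0:ℝ) ℓB, 0 < μ0 ℓ + p0 ℓ)
    (hA0nonneg : ∀ ℓ ∈ Set.Icc (0:ℝ) ℓB, 0 ≤ A0 ℓ)
    (hφ0pos : ∀ ℓ ∈ Set.Ioc (0:ℝ) ℓB, 0 < φ0 ℓ)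
    (hpole : Filter.Tendsto (fun ℓ => ℓ * φ0 ℓ) (nhdsWithin 0 (Set.Ioi 0)) (nhds γ))
    (hcpos : ∀ ℓ ∈ Set.Icc (0:ℝ) ℓB, 0 < c ℓ)
    (hΨpderiv : ∀ ℓ ∈ Set.Icc (0:ℝ) ℓB, HasDerivWithinAt Ψp (Ψp' ℓ) (Set.Icc 0 ℓB) ℓ)
    (hΨp'cont : ContinuousOn Ψp' (Set.Icc 0 ℓB))
    (hΨqderiv : ∀ ℓ ∈ Set.Icc (0:ℝ) ℓB, HasDerivWithinAt Ψq (Ψq' ℓ) (Set.Icc 0 ℓB) ℓ)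
    (hΨq'cont : ContinuousOn Ψq' (Set.Icc 0 ℓB))
    (hS1 : ∀ ℓ ∈ Set.Ioc (0:ℝ) ℓB,
      Ψp' ℓ + ((μ0 ℓ + p0 ℓ) / φ0 ℓ + (2 + 1 / c ℓ) * A0 ℓ) * Ψp ℓ =
        ((μ0 ℓ + p0 ℓ) / φ0 ℓ * (φ0 ℓ / 2 + 2 * A0 ℓ) + (A0 ℓ) ^ 2 / c ℓ +
            A0 ℓ * μ0' ℓ / (μ0 ℓ + p0 ℓ) + (υ ℓ) ^ 2) * Ψq ℓ)
    (hS2 : ∀ ℓ ∈ Set.Ioc (0:ℝ) ℓB,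
      Ψq' ℓ + (φ0 ℓ + 2 * A0 ℓ - A0 ℓ / c ℓ - μ0' ℓ / (μ0 ℓ + p0 ℓ) -
          (μ0 ℓ + p0 ℓ) / φ0 ℓ) * Ψq ℓ = -Ψp ℓ / c ℓ)
    (hnt : Ψp 0 ≠ 0) :
    (1 + γ) * c 0 * Ψq' 0 = -Ψp 0 ∧
    Ψq' 0 * Ψp 0 < 0 ∧
    ∃ ε ∈ Set.Ioo (0:ℝ) ℓB, ∀ ℓ ∈ Set.Ioo (0:ℝ) ε, Ψp ℓ * Ψq ℓ < 0 := by
  classical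
  have h0mem : (0:ℝ) ∈ Set.Icc (0:ℝ) ℓB := ⟨le_refl 0, hℓB.le⟩
  set l : Filter ℝ := nhdsWithin 0 (Set.Ioi 0) with hldef
  have hmemIoc : Set.Ioc (0:ℝ) ℓB ∈ l := Ioc_mem_nhdsGT_of_mem ⟨le_refl 0, hℓB⟩
  have hlnhds : l ≤ nhds (0:ℝ) := nhdsWithin_le_nhds
  have hlIcc : l ≤ nhdsWithin 0 (Set.Icc 0 ℓB) :=
    le_inf hlnhds (le_principal_iff.2 (mem_of_superset hmemIoc Set.Ioc_subset_Icc_self))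
  have hlslope : l ≤ nhdsWithin 0 (Set.Icc 0 ℓB \ {0}) :=
    le_inf hlnhds (le_principal_iff.2 (mem_of_superset hmemIoc
      (fun x hx => ⟨⟨hx.1.le, hx.2⟩, hx.1.ne'⟩)))
  have hc0 : 0 < c 0 := hcpos 0 h0mem
  have hμp0 : 0 < μ0 0 + p0 0 := hμppos 0 h0mem
  have hΨqcont : ContinuousOn Ψq (Set.Icc 0 ℓB) :=
    fun ℓ hℓ => (hΨqderiv ℓ hℓ).continuousWithinAt
  have hΨpcont : ContinuousOn Ψp (Set.Icc 0 ℓB) :=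
    fun ℓ hℓ => (hΨpderiv ℓ hℓ).continuousWithinAt
  have hμ0cont : ContinuousOn μ0 (Set.Icc 0 ℓB) :=
    fun ℓ hℓ => (hμ0deriv ℓ hℓ).continuousWithinAt
  have tΨp : Tendsto Ψp l (nhds (Ψp 0)) := (hΨpcont 0 h0mem).mono_left hlIcc
  have tΨq : Tendsto Ψq l (nhds (Ψq 0)) := (hΨqcont 0 h0mem).mono_left hlIcc
  have tΨq' : Tendsto Ψq' l (nhds (Ψq' 0)) := (hΨq'cont 0 h0mem).mono_left hlIcc
  have tA0 : Tendsto A0 l (nhds (A0 0)) := (hA0cont 0 h0mem).mono_left hlIcc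
  have tc : Tendsto c l (nhds (c 0)) := (hccont 0 h0mem).mono_left hlIcc
  have tμ0' : Tendsto μ0' l (nhds (μ0' 0)) := (hμ0'cont 0 h0mem).mono_left hlIcc
  have tμ0 : Tendsto μ0 l (nhds (μ0 0)) := (hμ0cont 0 h0mem).mono_left hlIcc
  have tp0 : Tendsto p0 l (nhds (p0 0)) := (hp0cont 0 h0mem).mono_left hlIcc
  have tid : Tendsto (fun ℓ : ℝ => ℓ) l (nhds 0) := tendsto_id.mono_left hlnhds
  have tinvφ : Tendsto (fun ℓ => (φ0 ℓ)⁻¹) l (nhds 0) := by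
    have h1 : Tendsto (fun ℓ => ℓ * (ℓ * φ0 ℓ)⁻¹) l (nhds (0 * γ⁻¹)) :=
      tid.mul (hpole.inv₀ hγ.ne')
    rw [zero_mul] at h1
    refine Tendsto.congr' ?_ h1
    filter_upwards [self_mem_nhdsWithin] with x hx
    have hxne : x ≠ 0 := (Set.mem_Ioi.mp hx).ne'
    rw [mul_inv, ← mul_assoc, mul_inv_cancel₀ hxne, one_mul]
  -- H tends to H0
  have tH : Tendsto (fun ℓ => -Ψp ℓ / c ℓ - Ψq' ℓ
      - (2 * A0 ℓ - A0 ℓ / c ℓ - μ0' ℓ / (μ0 ℓ + p0 ℓ)) * Ψq ℓ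
      + ((μ0 ℓ + p0 ℓ) * (φ0 ℓ)⁻¹) * Ψq ℓ) l
      (nhds (-Ψp 0 / c 0 - Ψq' 0
      - (2 * A0 0 - A0 0 / c 0 - μ0' 0 / (μ0 0 + p0 0)) * Ψq 0
      + ((μ0 0 + p0 0) * 0) * Ψq 0)) := by
    exact (((tΨp.neg.div tc hc0.ne').sub tΨq').sub
      ((((tendsto_const_nhds.mul tA0).sub (tA0.div tc hc0.ne')).sub
        (tμ0'.div (tμ0.add tp0) hμp0.ne')).mul tΨq)).add
      (((tμ0.add tp0).mul tinvφ).mul tΨq)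
  have heq : ∀ᶠ ℓ in l, (-Ψp ℓ / c ℓ - Ψq' ℓ
      - (2 * A0 ℓ - A0 ℓ / c ℓ - μ0' ℓ / (μ0 ℓ + p0 ℓ)) * Ψq ℓ
      + ((μ0 ℓ + p0 ℓ) * (φ0 ℓ)⁻¹) * Ψq ℓ) = φ0 ℓ * Ψq ℓ := by
    filter_upwards [hmemIoc] with ℓ hℓ
    have h := hS2 ℓ hℓ
    linear_combination -h
  have tφΨq : Tendsto (fun ℓ => φ0 ℓ * Ψq ℓ) l (nhds (-Ψp 0 / c 0 - Ψq' 0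
      - (2 * A0 0 - A0 0 / c 0 - μ0' 0 / (μ0 0 + p0 0)) * Ψq 0
      + ((μ0 0 + p0 0) * 0) * Ψq 0)) := tH.congr' heq
  -- stage 1 : Ψq 0 = 0
  have hq0 : Ψq 0 = 0 := by
    have h1 : Tendsto (fun ℓ => ℓ * φ0 ℓ * Ψq ℓ) l (nhds (γ * Ψq 0)) := hpole.mul tΨq
    have h2 : Tendsto (fun ℓ => ℓ * φ0 ℓ * Ψq ℓ) l (nhds 0) := by
      have := tid.mul tφΨq
      rw [zero_mul] at this
      simpa [mul_assoc] using this
    have h3 : γ * Ψq 0 = 0 := tendsto_nhds_unique h1 h2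
    rcases mul_eq_zero.mp h3 with h | h
    · exact absurd h hγ.ne'
    · exact h
  -- slope limit
  have tslope : Tendsto (fun ℓ => Ψq ℓ / ℓ) l (nhds (Ψq' 0)) := by
    have h := (hasDerivWithinAt_iff_tendsto_slope.mp (hΨqderiv 0 h0mem)).mono_left hlslope
    rw [slope_fun_def_field] at h
    simpa [hq0] using h
  have tφΨq2 : Tendsto (fun ℓ => φ0 ℓ * Ψq ℓ) l (nhds (γ * Ψq' 0)) := by
    have h := hpole.mul tslope
    refine Tendsto.congr' ?_ h
    filter_upwards [self_mem_nhdsWithin] with x hx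
    have hxne : x ≠ 0 := (Set.mem_Ioi.mp hx).ne'
    field_simp
  have hkey : -Ψp 0 / c 0 - Ψq' 0
      - (2 * A0 0 - A0 0 / c 0 - μ0' 0 / (μ0 0 + p0 0)) * Ψq 0
      + ((μ0 0 + p0 0) * 0) * Ψq 0 = γ * Ψq' 0 := tendsto_nhds_unique tφΨq tφΨq2
  rw [hq0] at hkey
  have hkey2 : -Ψp 0 / c 0 - Ψq' 0 = γ * Ψq' 0 := by linarith [hkey]
  have eq1 : (1 + γ) * c 0 * Ψq' 0 = -Ψp 0 := by
    have h4 : -Ψp 0 / c 0 * c 0 = -Ψp 0 := div_mul_cancel₀ _ hc0.ne'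
    nlinarith [hkey2, h4]
  have hpos : 0 < (1 + γ) * c 0 := mul_pos (by linarith) hc0
  have hsq : 0 < Ψp 0 * Ψp 0 := mul_self_pos.mpr hnt
  have h3 : (1 + γ) * c 0 * (Ψq' 0 * Ψp 0) = -(Ψp 0 * Ψp 0) := by
    linear_combination Ψp 0 * eq1
  refine ⟨eq1, ?_, ?_⟩
  · nlinarith [h3, hpos, hsq]
  · have hprod : Ψp 0 * Ψq' 0 < 0 := by nlinarith [h3, hpos, hsq]
    have tprod : Tendsto (fun ℓ => Ψp ℓ * (Ψq ℓ / ℓ)) l (nhds (Ψp 0 * Ψq' 0)) :=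
      tΨp.mul tslope
    have hev : ∀ᶠ ℓ in l, Ψp ℓ * (Ψq ℓ / ℓ) < 0 :=
      tprod.eventually_lt_const hprod |>.mono (fun x hx => hx)
    rcases (mem_nhdsGT_iff_exists_Ioo_subset).mp hev with ⟨u, hu, hsub⟩
    have hu0 : (0:ℝ) < u := hu
    refine ⟨min u ℓB / 2, ⟨by positivity, ?_⟩, ?_⟩
    · have : min u ℓB ≤ ℓB := min_le_right _ _
      linarith
    · intro ℓ hℓ
      have hℓ0 : 0 < ℓ := hℓ.1
      have hℓu : ℓ < u := by
        have h1 : min u ℓB / 2 ≤ u / 2 := by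
          have := min_le_left u ℓB; linarith
        linarith [hℓ.2]
      have hs : Ψp ℓ * (Ψq ℓ / ℓ) < 0 := hsub ⟨hℓ0, hℓu⟩
      have hrw : Ψp ℓ * Ψq ℓ = (Ψp ℓ * (Ψq ℓ / ℓ)) * ℓ := by
        field_simp
      rw [hrw]
      exact mul_neg_of_neg_of_pos hs hℓ0
end

section
/- Suppose (Ψ_p, Ψ_Q) is a static-frame perturbation, let a ∈ (0, ℓ_B], and assume Ψ_p(ℓ) > 0 for all ℓ ∈ (0, a] and Ψ_Q(ℓ) < 0 for all ℓ ∈ (0, a). Then Ψ_Q(a) < 0. In other words, Ψ_Q cannot attain a first zero at a point where Ψ_p is still positive (if Ψ_Q(a) = 0 one would need Ψ_Q′(a) ≥ 0, while equation (S2) forces Ψ_Q′(a) = −Ψ_p(a)/c(a) < 0, a contradiction). -/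
open Set Filter

theorem stmt_5
    (ℓB γ : ℝ)
    (μ0 μ0' p0 A0 φ0 c υ Ψp Ψp' Ψq Ψq' : ℝ → ℝ)
    (hℓB : 0 < ℓB) (hγ : 0 < γ)
    (hμ0deriv : ∀ ℓ ∈ Set.Icc (0:ℝ) ℓB, HasDerivWithinAt μ0 (μ0' ℓ) (Set.Icc 0 ℓB) ℓ)
    (hμ0'cont : ContinuousOn μ0' (Set.Icc 0 ℓB))
    (hp0cont : ContinuousOn p0 (Set.Icc 0 ℓB))
    (hA0cont : ContinuousOn A0 (Set.Icc 0 ℓB))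
    (hφ0cont : ContinuousOn φ0 (Set.Ioc 0 ℓB))
    (hccont : ContinuousOn c (Set.Icc 0 ℓB))
    (hυcont : ContinuousOn υ (Set.Icc 0 ℓB))
    (hμ0nonneg : ∀ ℓ ∈ Set.Icc (0:ℝ) ℓB, 0 ≤ μ0 ℓ)
    (hμppos : ∀ ℓ ∈ Set.Icc (0:ℝ) ℓB, 0 < μ0 ℓ + p0 ℓ)
    (hA0nonneg : ∀ ℓ ∈ Set.Icc (0:ℝ) ℓB, 0 ≤ A0 ℓ)
    (hφ0pos : ∀ ℓ ∈ Set.Ioc (0:ℝ) ℓB, 0 < φ0 ℓ)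
    (hpole : Filter.Tendsto (fun ℓ => ℓ * φ0 ℓ) (nhdsWithin 0 (Set.Ioi 0)) (nhds γ))
    (hcpos : ∀ ℓ ∈ Set.Icc (0:ℝ) ℓB, 0 < c ℓ)
    (hΨpderiv : ∀ ℓ ∈ Set.Icc (0:ℝ) ℓB, HasDerivWithinAt Ψp (Ψp' ℓ) (Set.Icc 0 ℓB) ℓ)
    (hΨp'cont : ContinuousOn Ψp' (Set.Icc 0 ℓB))
    (hΨqderiv : ∀ ℓ ∈ Set.Icc (0:ℝ) ℓB, HasDerivWithinAt Ψq (Ψq' ℓ) (Set.Icc 0 ℓB) ℓ)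
    (hΨq'cont : ContinuousOn Ψq' (Set.Icc 0 ℓB))
    (hS1 : ∀ ℓ ∈ Set.Ioc (0:ℝ) ℓB,
      Ψp' ℓ + ((μ0 ℓ + p0 ℓ) / φ0 ℓ + (2 + 1 / c ℓ) * A0 ℓ) * Ψp ℓ =
        ((μ0 ℓ + p0 ℓ) / φ0 ℓ * (φ0 ℓ / 2 + 2 * A0 ℓ) + (A0 ℓ) ^ 2 / c ℓ +
            A0 ℓ * μ0' ℓ / (μ0 ℓ + p0 ℓ) + (υ ℓ) ^ 2) * Ψq ℓ)
    (hS2 : ∀ ℓ ∈ Set.Ioc (0:ℝ) ℓB,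
      Ψq' ℓ + (φ0 ℓ + 2 * A0 ℓ - A0 ℓ / c ℓ - μ0' ℓ / (μ0 ℓ + p0 ℓ) -
          (μ0 ℓ + p0 ℓ) / φ0 ℓ) * Ψq ℓ = -Ψp ℓ / c ℓ)
    (a : ℝ) (ha : a ∈ Set.Ioc (0:ℝ) ℓB)
    (hΨppos : ∀ ℓ ∈ Set.Ioc (0:ℝ) a, 0 < Ψp ℓ)
    (hΨqneg : ∀ ℓ ∈ Set.Ioo (0:ℝ) a, Ψq ℓ < 0) :
    Ψq a < 0 := by

  have haI : a ∈ Set.Icc (0:ℝ) ℓB := ⟨ha.1.le, ha.2⟩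
  have hsub : Set.Ioo (0:ℝ) a ⊆ Set.Icc 0 ℓB := fun x hx => ⟨hx.1.le, hx.2.le.trans ha.2⟩
  have hnb : (nhdsWithin a (Set.Ioo 0 a)).NeBot := by
    rw [← mem_closure_iff_nhdsWithin_neBot, closure_Ioo ha.1.ne]
    exact ⟨ha.1.le, le_refl a⟩
  have hle : nhdsWithin a (Set.Ioo 0 a) ≤ nhdsWithin a (Set.Icc 0 ℓB) :=
    nhdsWithin_mono a hsub
  have hqa_le : Ψq a ≤ 0 := by
    have ht : Tendsto Ψq (nhdsWithin a (Set.Ioo 0 a)) (nhds (Ψq a)) :=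
      ((hΨqderiv a haI).continuousWithinAt).tendsto.mono_left hle
    exact le_of_tendsto ht (eventually_nhdsWithin_of_forall fun ℓ hℓ => (hΨqneg ℓ hℓ).le)
  rcases lt_or_eq_of_le hqa_le with h | h
  · exact h
  · exfalso
    have hslope : Tendsto (slope Ψq a) (nhdsWithin a (Set.Ioo 0 a)) (nhds (Ψq' a)) := by
      have := (hasDerivWithinAt_iff_tendsto_slope).1 (hΨqderiv a haI)
      exact this.mono_left (nhdsWithin_mono a fun x hx =>
        ⟨hsub hx, fun hxa => (hx.2.ne (by simpa using hxa))⟩)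
    have hge : 0 ≤ Ψq' a := by
      refine ge_of_tendsto hslope (eventually_nhdsWithin_of_forall fun ℓ hℓ => ?_)
      have heq : slope Ψq a ℓ = Ψq ℓ / (ℓ - a) := by rw [slope_def_field, h, sub_zero]
      rw [heq, ← neg_div_neg_eq]
      exact div_nonneg (by linarith [hΨqneg ℓ hℓ]) (by linarith [hℓ.2])
    have hS2a := hS2 a ⟨ha.1, ha.2⟩
    rw [h, mul_zero, add_zero] at hS2a
    have hca := hcpos a haI
    have hpa := hΨppos a ⟨ha.1, le_refl a⟩
    have hneg : -Ψp a / c a < 0 := div_neg_of_neg_of_pos (by linarith) hca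
    linarith [hS2a ▸ hge]
end

section
/- Suppose (Ψ_p, Ψ_Q) is a static-frame perturbation. Then the surface boundary condition Ψ_p(ℓ_B) = A₀(ℓ_B)·Ψ_Q(ℓ_B) holds if and only if Ψ_Q satisfies the separated (Robin-type) self-adjoint boundary condition Ψ_Q′(ℓ_B) + [ φ₀ + 2·A₀ − μ₀′/(μ₀+p₀) − (μ₀+p₀)/φ₀ ](ℓ_B) · Ψ_Q(ℓ_B) = 0. -/
open Set Filter

theorem stmt_7
    (ℓB γ : ℝ)
    (μ0 μ0' p0 A0 φ0 c υ Ψp Ψp' Ψq Ψq' : ℝ → ℝ)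
    (hℓB : 0 < ℓB) (hγ : 0 < γ)
    (hμ0deriv : ∀ ℓ ∈ Set.Icc (0:ℝ) ℓB, HasDerivWithinAt μ0 (μ0' ℓ) (Set.Icc 0 ℓB) ℓ)
    (hμ0'cont : ContinuousOn μ0' (Set.Icc 0 ℓB))
    (hp0cont : ContinuousOn p0 (Set.Icc 0 ℓB))
    (hA0cont : ContinuousOn A0 (Set.Icc 0 ℓB))
    (hφ0cont : ContinuousOn φ0 (Set.Ioc 0 ℓB))
    (hccont : ContinuousOn c (Set.Icc 0 ℓB))
    (hυcont : ContinuousOn υ (Set.Icc 0 ℓB))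
    (hμ0nonneg : ∀ ℓ ∈ Set.Icc (0:ℝ) ℓB, 0 ≤ μ0 ℓ)
    (hμppos : ∀ ℓ ∈ Set.Icc (0:ℝ) ℓB, 0 < μ0 ℓ + p0 ℓ)
    (hA0nonneg : ∀ ℓ ∈ Set.Icc (0:ℝ) ℓB, 0 ≤ A0 ℓ)
    (hφ0pos : ∀ ℓ ∈ Set.Ioc (0:ℝ) ℓB, 0 < φ0 ℓ)
    (hpole : Filter.Tendsto (fun ℓ => ℓ * φ0 ℓ) (nhdsWithin 0 (Set.Ioi 0)) (nhds γ))
    (hcpos : ∀ ℓ ∈ Set.Icc (0:ℝ) ℓB, 0 < c ℓ)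
    (hΨpderiv : ∀ ℓ ∈ Set.Icc (0:ℝ) ℓB, HasDerivWithinAt Ψp (Ψp' ℓ) (Set.Icc 0 ℓB) ℓ)
    (hΨp'cont : ContinuousOn Ψp' (Set.Icc 0 ℓB))
    (hΨqderiv : ∀ ℓ ∈ Set.Icc (0:ℝ) ℓB, HasDerivWithinAt Ψq (Ψq' ℓ) (Set.Icc 0 ℓB) ℓ)
    (hΨq'cont : ContinuousOn Ψq' (Set.Icc 0 ℓB))
    (hS1 : ∀ ℓ ∈ Set.Ioc (0:ℝ) ℓB,
      Ψp' ℓ + ((μ0 ℓ + p0 ℓ) / φ0 ℓ + (2 + 1 / c ℓ) * A0 ℓ) * Ψp ℓ =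
        ((μ0 ℓ + p0 ℓ) / φ0 ℓ * (φ0 ℓ / 2 + 2 * A0 ℓ) + (A0 ℓ) ^ 2 / c ℓ +
            A0 ℓ * μ0' ℓ / (μ0 ℓ + p0 ℓ) + (υ ℓ) ^ 2) * Ψq ℓ)
    (hS2 : ∀ ℓ ∈ Set.Ioc (0:ℝ) ℓB,
      Ψq' ℓ + (φ0 ℓ + 2 * A0 ℓ - A0 ℓ / c ℓ - μ0' ℓ / (μ0 ℓ + p0 ℓ) -
          (μ0 ℓ + p0 ℓ) / φ0 ℓ) * Ψq ℓ = -Ψp ℓ / c ℓ)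
    : Ψp ℓB = A0 ℓB * Ψq ℓB ↔
      Ψq' ℓB + (φ0 ℓB + 2 * A0 ℓB - μ0' ℓB / (μ0 ℓB + p0 ℓB) -
          (μ0 ℓB + p0 ℓB) / φ0 ℓB) * Ψq ℓB = 0 := by
  have h2 := hS2 ℓB ⟨hℓB, le_rfl⟩
  have hc := hcpos ℓB ⟨hℓB.le, le_rfl⟩
  have hkey : Ψq' ℓB + (φ0 ℓB + 2 * A0 ℓB - μ0' ℓB / (μ0 ℓB + p0 ℓB) -
      (μ0 ℓB + p0 ℓB) / φ0 ℓB) * Ψq ℓB = (A0 ℓB * Ψq ℓB - Ψp ℓB) / c ℓB := by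
    have e : (A0 ℓB * Ψq ℓB - Ψp ℓB) / c ℓB =
        -Ψp ℓB / c ℓB + A0 ℓB / c ℓB * Ψq ℓB := by ring
    rw [e, ← h2]; ring
  rw [hkey, div_eq_zero_iff]
  constructor
  · intro h; left; linarith
  · rintro (h | h)
    · linarith
    · exact absurd h hc.ne'
end

section
/- Assume in addition that the coefficient functions P, M, K and c are continuously differentiable on (0, ℓ_B] (e.g. the background is real analytic), and let (Ψ_p, Ψ_Q) be a static-frame perturbation. Fix ℓ₀ ∈ (0, ℓ_B], and define F := P + M + c′/c = φ₀ + 4·A₀ − μ₀′/(μ₀+p₀) + c′/c, the weight w(ℓ) := exp(∫_{ℓ₀}^{ℓ} F(x) dx)/c(ℓ), and G := P′ + (c′/c)·P + P·M + K/c. Then Ψ_Q is twice differentiable on (0, ℓ_B] and satisfies the second-order equation in formally self-adjoint (Sturm–Liouville) form: d/dℓ [ exp(∫_{ℓ₀}^{ℓ} F(x) dx) · Ψ_Q′(ℓ) ] + exp(∫_{ℓ₀}^{ℓ} F(x) dx) · G(ℓ) · Ψ_Q(ℓ) = − υ(ℓ)² · w(ℓ) · Ψ_Q(ℓ) for every ℓ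 ∈ (0, ℓ_B]. -/
open Set Filter

theorem stmt_9
    (ℓB γ : ℝ)
    (μ0 μ0' p0 A0 φ0 c υ Ψp Ψp' Ψq Ψq' : ℝ → ℝ)
    (hℓB : 0 < ℓB) (hγ : 0 < γ)
    (hμ0deriv : ∀ ℓ ∈ Set.Icc (0:ℝ) ℓB, HasDerivWithinAt μ0 (μ0' ℓ) (Set.Icc 0 ℓB) ℓ)
    (hμ0'cont : ContinuousOn μ0' (Set.Icc 0 ℓB))
    (hp0cont : ContinuousOn p0 (Set.Icc 0 ℓB))
    (hA0cont : ContinuousOn A0 (Set.Icc 0 ℓB))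
    (hφ0cont : ContinuousOn φ0 (Set.Ioc 0 ℓB))
    (hccont : ContinuousOn c (Set.Icc 0 ℓB))
    (hυcont : ContinuousOn υ (Set.Icc 0 ℓB))
    (hμ0nonneg : ∀ ℓ ∈ Set.Icc (0:ℝ) ℓB, 0 ≤ μ0 ℓ)
    (hμppos : ∀ ℓ ∈ Set.Icc (0:ℝ) ℓB, 0 < μ0 ℓ + p0 ℓ)
    (hA0nonneg : ∀ ℓ ∈ Set.Icc (0:ℝ) ℓB, 0 ≤ A0 ℓ)
    (hφ0pos : ∀ ℓ ∈ Set.Ioc (0:ℝ) ℓB, 0 < φ0 ℓ)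
    (hpole : Filter.Tendsto (fun ℓ => ℓ * φ0 ℓ) (nhdsWithin 0 (Set.Ioi 0)) (nhds γ))
    (hcpos : ∀ ℓ ∈ Set.Icc (0:ℝ) ℓB, 0 < c ℓ)
    (hΨpderiv : ∀ ℓ ∈ Set.Icc (0:ℝ) ℓB, HasDerivWithinAt Ψp (Ψp' ℓ) (Set.Icc 0 ℓB) ℓ)
    (hΨp'cont : ContinuousOn Ψp' (Set.Icc 0 ℓB))
    (hΨqderiv : ∀ ℓ ∈ Set.Icc (0:ℝ) ℓB, HasDerivWithinAt Ψq (Ψq' ℓ) (Set.Icc 0 ℓB) ℓ)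
    (hΨq'cont : ContinuousOn Ψq' (Set.Icc 0 ℓB))
    (hS1 : ∀ ℓ ∈ Set.Ioc (0:ℝ) ℓB,
      Ψp' ℓ + ((μ0 ℓ + p0 ℓ) / φ0 ℓ + (2 + 1 / c ℓ) * A0 ℓ) * Ψp ℓ =
        ((μ0 ℓ + p0 ℓ) / φ0 ℓ * (φ0 ℓ / 2 + 2 * A0 ℓ) + (A0 ℓ) ^ 2 / c ℓ +
            A0 ℓ * μ0' ℓ / (μ0 ℓ + p0 ℓ) + (υ ℓ) ^ 2) * Ψq ℓ)
    (hS2 : ∀ ℓ ∈ Set.Ioc (0:ℝ) ℓB,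
      Ψq' ℓ + (φ0 ℓ + 2 * A0 ℓ - A0 ℓ / c ℓ - μ0' ℓ / (μ0 ℓ + p0 ℓ) -
          (μ0 ℓ + p0 ℓ) / φ0 ℓ) * Ψq ℓ = -Ψp ℓ / c ℓ)
    (M K P M' K' P' c' F : ℝ → ℝ) (ℓ₀ : ℝ) (hℓ₀ : ℓ₀ ∈ Set.Ioc (0:ℝ) ℓB)
    (hMdef : ∀ ℓ ∈ Set.Ioc (0:ℝ) ℓB,
      M ℓ = (μ0 ℓ + p0 ℓ) / φ0 ℓ + (2 + 1 / c ℓ) * A0 ℓ)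
    (hKdef : ∀ ℓ ∈ Set.Ioc (0:ℝ) ℓB,
      K ℓ = (μ0 ℓ + p0 ℓ) / φ0 ℓ * (φ0 ℓ / 2 + 2 * A0 ℓ) + (A0 ℓ) ^ 2 / c ℓ +
          A0 ℓ * μ0' ℓ / (μ0 ℓ + p0 ℓ))
    (hPdef : ∀ ℓ ∈ Set.Ioc (0:ℝ) ℓB,
      P ℓ = φ0 ℓ + 2 * A0 ℓ - A0 ℓ / c ℓ - μ0' ℓ / (μ0 ℓ + p0 ℓ) -
          (μ0 ℓ + p0 ℓ) / φ0 ℓ)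
    (hMderiv : ∀ ℓ ∈ Set.Ioc (0:ℝ) ℓB, HasDerivWithinAt M (M' ℓ) (Set.Ioc 0 ℓB) ℓ)
    (hM'cont : ContinuousOn M' (Set.Ioc 0 ℓB))
    (hKderiv : ∀ ℓ ∈ Set.Ioc (0:ℝ) ℓB, HasDerivWithinAt K (K' ℓ) (Set.Ioc 0 ℓB) ℓ)
    (hK'cont : ContinuousOn K' (Set.Ioc 0 ℓB))
    (hPderiv : ∀ ℓ ∈ Set.Ioc (0:ℝ) ℓB, HasDerivWithinAt P (P' ℓ) (Set.Ioc 0 ℓB) ℓ)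
    (hP'cont : ContinuousOn P' (Set.Ioc 0 ℓB))
    (hcderiv : ∀ ℓ ∈ Set.Ioc (0:ℝ) ℓB, HasDerivWithinAt c (c' ℓ) (Set.Ioc 0 ℓB) ℓ)
    (hc'cont : ContinuousOn c' (Set.Ioc 0 ℓB))
    (hFdef : ∀ ℓ ∈ Set.Ioc (0:ℝ) ℓB, F ℓ = P ℓ + M ℓ + c' ℓ / c ℓ) :
    (∀ ℓ ∈ Set.Ioc (0:ℝ) ℓB,
      F ℓ = φ0 ℓ + 4 * A0 ℓ - μ0' ℓ / (μ0 ℓ + p0 ℓ) + c' ℓ / c ℓ) ∧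
    (∀ ℓ ∈ Set.Ioc (0:ℝ) ℓB, DifferentiableWithinAt ℝ Ψq' (Set.Ioc 0 ℓB) ℓ) ∧
    (∀ ℓ ∈ Set.Ioc (0:ℝ) ℓB,
      HasDerivWithinAt (fun x => Real.exp (∫ t in ℓ₀..x, F t) * Ψq' x)
        (-(υ ℓ) ^ 2 * (Real.exp (∫ t in ℓ₀..ℓ, F t) / c ℓ) * Ψq ℓ -
          Real.exp (∫ t in ℓ₀..ℓ, F t) *
            (P' ℓ + c' ℓ / c ℓ * P ℓ + P ℓ * M ℓ + K ℓ / c ℓ) * Ψq ℓ)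
        (Set.Ioc 0 ℓB) ℓ) := by

  have hsub : Set.Ioc (0:ℝ) ℓB ⊆ Set.Icc 0 ℓB := Set.Ioc_subset_Icc_self
  have hcne : ∀ ℓ ∈ Set.Ioc (0:ℝ) ℓB, c ℓ ≠ 0 := fun ℓ hℓ => (hcpos ℓ (hsub hℓ)).ne'
  have hφne : ∀ ℓ ∈ Set.Ioc (0:ℝ) ℓB, φ0 ℓ ≠ 0 := fun ℓ hℓ => (hφ0pos ℓ hℓ).ne'
  have hμpne : ∀ ℓ ∈ Set.Ioc (0:ℝ) ℓB, μ0 ℓ + p0 ℓ ≠ 0 := fun ℓ hℓ => (hμppos ℓ (hsub hℓ)).ne'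
  -- S2 rewritten with P
  have hs2 : ∀ ℓ ∈ Set.Ioc (0:ℝ) ℓB, Ψq' ℓ + P ℓ * Ψq ℓ = -Ψp ℓ / c ℓ := by
    intro ℓ hℓ; rw [hPdef ℓ hℓ]; exact hS2 ℓ hℓ
  have hs1 : ∀ ℓ ∈ Set.Ioc (0:ℝ) ℓB, Ψp' ℓ + M ℓ * Ψp ℓ = (K ℓ + (υ ℓ)^2) * Ψq ℓ := by
    intro ℓ hℓ; rw [hMdef ℓ hℓ, hKdef ℓ hℓ]; exact hS1 ℓ hℓ
  -- second derivative of Ψq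
  have hQ'' : ∀ ℓ ∈ Set.Ioc (0:ℝ) ℓB, HasDerivWithinAt Ψq'
      (-((Ψp' ℓ * c ℓ - Ψp ℓ * c' ℓ) / (c ℓ)^2) - (P' ℓ * Ψq ℓ + P ℓ * Ψq' ℓ))
      (Set.Ioc 0 ℓB) ℓ := by
    intro ℓ hℓ
    have h1 : HasDerivWithinAt (fun x => Ψp x / c x)
        ((Ψp' ℓ * c ℓ - Ψp ℓ * c' ℓ) / (c ℓ)^2) (Set.Ioc 0 ℓB) ℓ :=
      ((hΨpderiv ℓ (hsub hℓ)).mono hsub).div (hcderiv ℓ hℓ) (hcne ℓ hℓ)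
    have h2 : HasDerivWithinAt (fun x => P x * Ψq x)
        (P' ℓ * Ψq ℓ + P ℓ * Ψq' ℓ) (Set.Ioc 0 ℓB) ℓ :=
      (hPderiv ℓ hℓ).mul ((hΨqderiv ℓ (hsub hℓ)).mono hsub)
    have hg := (h1.neg.sub h2)
    refine hg.congr (fun x hx => ?_) ?_
    · have := hs2 x hx
      have hc := hcne x hx
      show Ψq' x = -(Ψp x / c x) - P x * Ψq x
      field_simp at this ⊢
      linarith
    · have := hs2 ℓ hℓ
      have hc := hcne ℓ hℓ
      show Ψq' ℓ = -(Ψp ℓ / c ℓ) - P ℓ * Ψq ℓ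
      field_simp at this ⊢
      linarith
  refine ⟨?_, ?_, ?_⟩
  · intro ℓ hℓ
    rw [hFdef ℓ hℓ, hPdef ℓ hℓ, hMdef ℓ hℓ]
    ring
  · intro ℓ hℓ
    exact (hQ'' ℓ hℓ).differentiableWithinAt
  · -- continuity of F on Ioc
    have hFcont : ContinuousOn F (Set.Ioc 0 ℓB) := by
      have hPc : ContinuousOn P (Set.Ioc 0 ℓB) :=
        fun ℓ hℓ => (hPderiv ℓ hℓ).continuousWithinAt
      have hMc : ContinuousOn M (Set.Ioc 0 ℓB) :=
        fun ℓ hℓ => (hMderiv ℓ hℓ).continuousWithinAt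
      have hcc : ContinuousOn c (Set.Ioc 0 ℓB) := hccont.mono hsub
      have : ContinuousOn (fun ℓ => P ℓ + M ℓ + c' ℓ / c ℓ) (Set.Ioc 0 ℓB) :=
        (hPc.add hMc).add (hc'cont.div hcc hcne)
      exact this.congr hFdef
    intro ℓ hℓ
    -- derivative of the integral
    have hEint : HasDerivWithinAt (fun x => ∫ t in ℓ₀..x, F t) (F ℓ) (Set.Ioc 0 ℓB) ℓ := by
      have hII : IntervalIntegrable F MeasureTheory.volume ℓ₀ ℓ := by
        apply ContinuousOn.intervalIntegrable
        apply hFcont.mono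
        exact Set.OrdConnected.uIcc_subset Set.ordConnected_Ioc hℓ₀ hℓ
      rcases eq_or_lt_of_le hℓ.2 with heq | hlt
      · -- ℓ = ℓB : left endpoint derivative within Iic
        subst heq
        have hmeas : StronglyMeasurableAtFilter F (nhdsWithin ℓ (Set.Iic ℓ))
            MeasureTheory.volume := by
          have h0 := ContinuousOn.stronglyMeasurableAtFilter_nhdsWithin (μ := MeasureTheory.volume) hFcont measurableSet_Ioc ℓ
          have heqf : nhdsWithin ℓ (Set.Ioc 0 ℓ) = nhdsWithin ℓ (Set.Iic ℓ) := by
            rw [← Set.Iic_inter_Ioi (a := ℓ) (b := (0:ℝ))]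
            · exact nhdsWithin_inter_of_mem' (mem_nhdsWithin_of_mem_nhds
                (Ioi_mem_nhds hℓ.1))
          rwa [heqf] at h0
        have hcw : ContinuousWithinAt F (Set.Iic ℓ) ℓ := by
          have h0 : ContinuousWithinAt F (Set.Ioc 0 ℓ) ℓ := hFcont ℓ hℓ
          exact h0.mono_of_mem_nhdsWithin (by
            rw [mem_nhdsWithin]
            exact ⟨Set.Ioi 0, isOpen_Ioi, hℓ.1, fun x hx => ⟨hx.1, hx.2⟩⟩)
        have := intervalIntegral.integral_hasDerivWithinAt_right (s := Set.Iic ℓ) (t := Set.Iic ℓ) hII hmeas hcw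
        exact this.mono (fun x hx => hx.2)
      · -- interior point
        have hmem : Set.Ioc 0 ℓB ∈ nhds ℓ :=
          mem_nhds_iff.mpr ⟨Set.Ioo 0 ℓB, fun x hx => ⟨hx.1, le_of_lt hx.2⟩,
            isOpen_Ioo, ⟨hℓ.1, hlt⟩⟩
        have hca : ContinuousAt F ℓ := (hFcont ℓ hℓ).continuousAt hmem
        have hmeas : StronglyMeasurableAtFilter F (nhds ℓ)
            MeasureTheory.volume := by
          have h0 := ContinuousOn.stronglyMeasurableAtFilter_nhdsWithin (μ := MeasureTheory.volume) hFcont measurableSet_Ioc ℓ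
          rwa [nhdsWithin_eq_nhds.mpr hmem] at h0
        exact (intervalIntegral.integral_hasDerivAt_right hII hmeas hca).hasDerivWithinAt
    have hE : HasDerivWithinAt (fun x => Real.exp (∫ t in ℓ₀..x, F t))
        (Real.exp (∫ t in ℓ₀..ℓ, F t) * F ℓ) (Set.Ioc 0 ℓB) ℓ := hEint.exp
    have hprod := hE.mul (hQ'' ℓ hℓ)
    refine hprod.congr_deriv ?_
    have hc := hcne ℓ hℓ
    have hp' : Ψp' ℓ = (K ℓ + (υ ℓ)^2) * Ψq ℓ - M ℓ * Ψp ℓ := by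
      have := hs1 ℓ hℓ; linarith
    have hp : Ψp ℓ = -(c ℓ * (Ψq' ℓ + P ℓ * Ψq ℓ)) := by
      have := hs2 ℓ hℓ
      field_simp at this
      linarith
    rw [hFdef ℓ hℓ, hp', hp]
    field_simp
    ring
end

section
/- Under these assumptions, for all r ∈ (0, R): (1) φ₀(r)² = (4/r²)·(1 − 2·M(r)/r); (2) E₀(r) = μ₀(r)/3 − 2·M(r)/r³; and (3) A₀(r)·φ₀(r) = p₀(r) + 2·M(r)/r³, where M(r) := (1/2)·∫₀^r μ₀(x)·x² dx is the mass function. -/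
open Set Filter

theorem stmt_11
    (R : ℝ) (hR : 0 < R)
    (μ0 p0 A0 E0 φ0 φ0' : ℝ → ℝ)
    (hμ0cont : ContinuousOn μ0 (Set.Ico 0 R))
    (hp0cont : ContinuousOn p0 (Set.Ioo 0 R))
    (hA0cont : ContinuousOn A0 (Set.Ioo 0 R))
    (hE0cont : ContinuousOn E0 (Set.Ioo 0 R))
    (hφ0deriv : ∀ r ∈ Set.Ioo (0:ℝ) R, HasDerivWithinAt φ0 (φ0' r) (Set.Ioo 0 R) r)
    (hφ0pos : ∀ r ∈ Set.Ioo (0:ℝ) R, 0 < φ0 r)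
    (hprop : ∀ r ∈ Set.Ioo (0:ℝ) R,
      r * φ0 r / 2 * φ0' r = -(φ0 r) ^ 2 / 2 - 2 / 3 * μ0 r - E0 r)
    (hconstraint : ∀ r ∈ Set.Ioo (0:ℝ) R,
      1 / 3 * (μ0 r + 3 * p0 r) - A0 r * φ0 r = E0 r)
    (hGauss : ∀ r ∈ Set.Ioo (0:ℝ) R,
      1 / r ^ 2 = (φ0 r) ^ 2 / 4 - E0 r + μ0 r / 3)
    (hcentre : Filter.Tendsto (fun r => r * φ0 r) (nhdsWithin 0 (Set.Ioi 0)) (nhds 2)) :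
    ∀ r ∈ Set.Ioo (0:ℝ) R,
      (φ0 r) ^ 2 = 4 / r ^ 2 * (1 - 2 * ((1 : ℝ) / 2 * ∫ x in (0:ℝ)..r, μ0 x * x ^ 2) / r) ∧
      E0 r = μ0 r / 3 - 2 * ((1 : ℝ) / 2 * ∫ x in (0:ℝ)..r, μ0 x * x ^ 2) / r ^ 3 ∧
      A0 r * φ0 r = p0 r + 2 * ((1 : ℝ) / 2 * ∫ x in (0:ℝ)..r, μ0 x * x ^ 2) / r ^ 3 := by
  set f : ℝ → ℝ := fun x => μ0 x * x ^ 2 with hf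
  have hfcont : ContinuousOn f (Set.Ico 0 R) :=
    hμ0cont.mul ((continuous_pow 2).continuousOn)
  set g : ℝ → ℝ := fun r => r ^ 3 * (φ0 r) ^ 2 / 4 - r + ∫ x in (0:ℝ)..r, f x with hg
  -- derivative of the primitive
  have hprim : ∀ r ∈ Set.Ioo (0:ℝ) R,
      HasDerivAt (fun u => ∫ x in (0:ℝ)..u, f x) (f r) r := by
    intro r hr
    have hsub : Set.uIcc (0:ℝ) r ⊆ Set.Ico 0 R := by
      rw [Set.uIcc_of_le hr.1.le]
      exact fun x hx => ⟨hx.1, lt_of_le_of_lt hx.2 hr.2⟩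
    have hint : IntervalIntegrable f MeasureTheory.volume 0 r :=
      (hfcont.mono hsub).intervalIntegrable
    have hca : ContinuousAt f r := by
      have : Set.Ioo (0:ℝ) R ∈ nhds r := (isOpen_Ioo).mem_nhds hr
      exact (hfcont.continuousAt (Filter.mem_of_superset this
        (fun x hx => ⟨hx.1.le, hx.2⟩)))
    have hmeas : StronglyMeasurableAtFilter f (nhds r) MeasureTheory.volume :=
      ContinuousOn.stronglyMeasurableAtFilter isOpen_Ioo
        (hfcont.mono (fun x hx => ⟨hx.1.le, hx.2⟩)) r hr
    exact intervalIntegral.integral_hasDerivAt_right hint hmeas hca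
  -- g has zero derivative on Ioo 0 R
  have hgderiv : ∀ r ∈ Set.Ioo (0:ℝ) R, HasDerivWithinAt g 0 (Set.Ioo 0 R) r := by
    intro r hr
    have hr0 : r ≠ 0 := ne_of_gt hr.1
    have h1 : HasDerivWithinAt (fun u => u ^ 3 * (φ0 u) ^ 2 / 4)
        ((3 * r ^ 2 * (φ0 r) ^ 2 + r ^ 3 * (2 * φ0 r * φ0' r)) / 4) (Set.Ioo 0 R) r := by
      have hp : HasDerivWithinAt (fun u : ℝ => u ^ 3) (3 * r ^ 2) (Set.Ioo 0 R) r := by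
        simpa using (hasDerivAt_pow 3 r).hasDerivWithinAt
      have hq : HasDerivWithinAt (fun u => (φ0 u) ^ 2) (2 * φ0 r * φ0' r) (Set.Ioo 0 R) r := by
        have := ((hφ0deriv r hr).fun_pow 2)
        simpa [mul_comm, mul_assoc, mul_left_comm] using this
      exact (hp.mul hq).div_const 4
    have h2 : HasDerivWithinAt g
        ((3 * r ^ 2 * (φ0 r) ^ 2 + r ^ 3 * (2 * φ0 r * φ0' r)) / 4 - 1 + f r)
        (Set.Ioo 0 R) r :=
      ((h1.sub (hasDerivWithinAt_id r _)).add ((hprim r hr).hasDerivWithinAt))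
    have key : (3 * r ^ 2 * (φ0 r) ^ 2 + r ^ 3 * (2 * φ0 r * φ0' r)) / 4 - 1 + f r = 0 := by
      have e1 := hprop r hr
      have e2 := hGauss r hr
      have e2' : 1 = r ^ 2 * ((φ0 r) ^ 2 / 4 - E0 r + μ0 r / 3) := by
        field_simp at e2 ⊢
        linarith [e2]
      have e1' : r ^ 2 * (r * φ0 r / 2 * φ0' r) =
          r ^ 2 * (-(φ0 r) ^ 2 / 2 - 2 / 3 * μ0 r - E0 r) := by rw [e1]
      simp only [hf]
      ring_nf
      ring_nf at e1' e2'
      linarith [e1', e2']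
    rwa [key] at h2
  -- g is constant on Ioo 0 R
  have huniq : UniqueDiffOn ℝ (Set.Ioo (0:ℝ) R) := isOpen_Ioo.uniqueDiffOn
  have hconst : ∀ r ∈ Set.Ioo (0:ℝ) R, ∀ s ∈ Set.Ioo (0:ℝ) R, g r = g s := by
    intro r hr s hs
    refine (convex_Ioo (0:ℝ) R).is_const_of_fderivWithin_eq_zero
      (fun x hx => ((hgderiv x hx).differentiableWithinAt)) ?_ hr hs
    intro x hx
    have := (hgderiv x hx).hasFDerivWithinAt.fderivWithin (huniq x hx)
    rw [this]
    ext y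
    simp
  -- limit of g at 0+ is 0
  have hIoo_sub : Set.Ioo (0:ℝ) R ⊆ Set.Ioi 0 := fun x hx => hx.1
  have hhalf : (0:ℝ) < R / 2 := by linarith
  have hsubR : Set.Ioo (0:ℝ) (R/2) ⊆ Set.Ioo 0 R :=
    Set.Ioo_subset_Ioo le_rfl (by linarith)
  have hne : (nhdsWithin (0:ℝ) (Set.Ioo 0 (R/2))).NeBot := by
    refine mem_closure_iff_nhdsWithin_neBot.mp ?_
    rw [closure_Ioo (ne_of_lt hhalf)]
    exact ⟨le_refl 0, hhalf.le⟩
  have hlim : Filter.Tendsto g (nhdsWithin 0 (Set.Ioo 0 (R/2))) (nhds 0) := by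
    have hle : nhdsWithin (0:ℝ) (Set.Ioo 0 (R/2)) ≤ nhdsWithin 0 (Set.Ioi 0) :=
      nhdsWithin_mono 0 (fun x hx => hx.1)
    have ht1 : Filter.Tendsto (fun r => r ^ 3 * (φ0 r) ^ 2 / 4)
        (nhdsWithin (0:ℝ) (Set.Ioo 0 (R/2))) (nhds 0) := by
      have hrphi : Filter.Tendsto (fun r => r * φ0 r) (nhdsWithin (0:ℝ) (Set.Ioo 0 (R/2)))
          (nhds 2) := hcentre.mono_left hle
      have hid : Filter.Tendsto (fun r : ℝ => r) (nhdsWithin (0:ℝ) (Set.Ioo 0 (R/2)))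
          (nhds 0) := tendsto_id.mono_left nhdsWithin_le_nhds
      have : Filter.Tendsto (fun r => r * (r * φ0 r) ^ 2 / 4)
          (nhdsWithin (0:ℝ) (Set.Ioo 0 (R/2))) (nhds (0 * 2 ^ 2 / 4)) :=
        ((hid.mul (hrphi.pow 2)).div_const 4)
      simp only [zero_mul, zero_div] at this
      refine this.congr' ?_
      filter_upwards [self_mem_nhdsWithin] with x hx
      ring
    have ht2 : Filter.Tendsto (fun r : ℝ => r) (nhdsWithin (0:ℝ) (Set.Ioo 0 (R/2)))
        (nhds 0) := tendsto_id.mono_left nhdsWithin_le_nhds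
    have ht3 : Filter.Tendsto (fun r => ∫ x in (0:ℝ)..r, f x)
        (nhdsWithin (0:ℝ) (Set.Ioo 0 (R/2))) (nhds 0) := by
      have hsub2 : Set.uIcc (0:ℝ) (R / 2) ⊆ Set.Ico 0 R := by
        rw [Set.uIcc_of_le hhalf.le]
        exact fun x hx => ⟨hx.1, lt_of_le_of_lt hx.2 (by linarith)⟩
      have hint2 : MeasureTheory.IntegrableOn f (Set.uIcc (0:ℝ) (R/2))
          MeasureTheory.volume :=
        (hfcont.mono hsub2).integrableOn_compact isCompact_uIcc
      have hcont2 := intervalIntegral.continuousOn_primitive_interval hint2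
      have h0mem : (0:ℝ) ∈ Set.uIcc (0:ℝ) (R/2) := Set.left_mem_uIcc
      have hcw := (hcont2 0 h0mem)
      have : Filter.Tendsto (fun r => ∫ x in (0:ℝ)..r, f x)
          (nhdsWithin (0:ℝ) (Set.uIcc 0 (R/2))) (nhds (∫ x in (0:ℝ)..(0:ℝ), f x)) := hcw
      simp only [intervalIntegral.integral_same] at this
      refine this.mono_left (nhdsWithin_mono 0 ?_)
      rw [Set.uIcc_of_le hhalf.le]
      exact fun x hx => ⟨hx.1.le, hx.2.le⟩
    have := (ht1.sub ht2).add ht3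
    simpa using this
  -- hence g = 0 on Ioo 0 R
  have hg0 : ∀ r ∈ Set.Ioo (0:ℝ) R, g r = 0 := by
    intro r hr
    have hev : Filter.Tendsto g (nhdsWithin (0:ℝ) (Set.Ioo 0 (R/2))) (nhds (g r)) := by
      have : ∀ᶠ x in nhdsWithin (0:ℝ) (Set.Ioo 0 (R/2)), g x = g r := by
        filter_upwards [self_mem_nhdsWithin] with x hx
        exact (hconst x (hsubR hx) r hr)
      exact (tendsto_const_nhds.congr' (by filter_upwards [this] with x hx; exact hx.symm))
    exact (tendsto_nhds_unique hev hlim)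
  -- conclude
  intro r hr
  have hr0 : r ≠ 0 := ne_of_gt hr.1
  have hgr := hg0 r hr
  have hint_eq : (∫ x in (0:ℝ)..r, μ0 x * x ^ 2) = ∫ x in (0:ℝ)..r, f x := rfl
  simp only [hg] at hgr
  have h1 : (φ0 r) ^ 2 =
      4 / r ^ 2 * (1 - 2 * ((1 : ℝ) / 2 * ∫ x in (0:ℝ)..r, μ0 x * x ^ 2) / r) := by
    field_simp
    nlinarith [hgr]
  refine ⟨h1, ?_, ?_⟩
  all_goals {
    have e3 := hconstraint r hr
    have e2 := hGauss r hr
    have e2' : 1 = r ^ 2 * ((φ0 r) ^ 2 / 4 - E0 r + μ0 r / 3) := by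
      field_simp at e2 ⊢
      linarith [e2]
    have e2r : r = r ^ 3 * ((φ0 r) ^ 2 / 4 - E0 r + μ0 r / 3) := by
      linear_combination r * e2'
    have e3r : ((1:ℝ) / 3 * (μ0 r + 3 * p0 r) - A0 r * φ0 r) * r ^ 3 = E0 r * r ^ 3 := by
      rw [e3]
    have hr3 : r ^ 3 ≠ 0 := pow_ne_zero 3 hr0
    field_simp
    linarith [e2r, hgr, e3r]
  }
end
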